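/- arXiv:math/0402127 — 6 statements merged into one kernel-verified Lean document; each statement's English description precedes it below -/
import Mathlib

section
/- Let K be a field, b ∈ K, and let a, c : ℤ → K be sequences such that: c_k ≠ 0 for all k; c_k ≠ c_l whenever k ≠ l; a_k ≠ c_l for all k, l; a_k c_l ≠ b and c_k c_l ≠ b for all k, l. For integers m ≥ k define f_{m,k} = [∏_{y=k}^{m−1} (a_y − b/c_k)(a_y − c_k)] / [∏_{y=k+1}^{m} (c_y − b/c_k)(c_y − c_k)], and for k ≥ l define g_{k,l} = ((b − a_l c_l)(a_l − c_l)) / ((b − a_k c_k)(a_k − c_k)) · [∏_{y=l+1}^{k} (a_y − b/c_k)(a_y − c_k)] / [∏_{y=l}^{k−1} (c_y − b/c_k)(c_y − c_k)]; set f_{m,k} = 0 and g_{k,l} = 0 when the index inequality fails. Then (f_{m,k}) and (g_{k,l}) are inverses of each other: for all integers m, l, Σ_{k = l}^{m} f_{m,k} · g_{k,l} equals 1 if m = l and 0 otherwise. -/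
open Finset
open scoped Classical

section Aux

open Polynomial

lemma lagrange_key {K : Type*} [Field K] {ι : Type*} [DecidableEq ι] (s : Finset ι) (v : ι → K)
    (hv : Set.InjOn v s) (Q : Polynomial K) (hQ : Q.natDegree + 1 < s.card) :
    ∑ i ∈ s, Q.eval (v i) * (∏ j ∈ s.erase i, (v i - v j))⁻¹ = 0 := by
  have hdeg : Q.degree < s.card := lt_of_le_of_lt Q.degree_le_natDegree
    (by exact_mod_cast Nat.lt_of_succ_lt hQ)
  have h := Lagrange.eq_interpolate hv hdeg
  have hc : Q.coeff (s.card - 1) = 0 :=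
    Q.coeff_eq_zero_of_natDegree_lt (by omega)
  rw [h, Lagrange.interpolate_apply, Polynomial.finset_sum_coeff] at hc
  rw [← hc]
  refine Finset.sum_congr rfl fun i hi => ?_
  rw [Polynomial.coeff_C_mul]
  congr 1
  have h2 := Polynomial.leadingCoeff_prod (R := K) (s.erase i)
      (fun j => Lagrange.basisDivisor (v i) (v j))
  have hbc : (Lagrange.basis s v i).coeff (s.card - 1) = (Lagrange.basis s v i).leadingCoeff := by
    rw [← Lagrange.natDegree_basis hv hi, Polynomial.coeff_natDegree]
  rw [hbc]
  unfold Lagrange.basis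
  rw [h2, ← Finset.prod_inv_distrib]
  refine Finset.prod_congr rfl fun j hj => ?_
  have hij : v i ≠ v j := by
    intro hvij
    exact (Finset.mem_erase.mp hj).1 ((hv (Finset.mem_of_mem_erase hj) hi hvij.symm))
  rw [Lagrange.basisDivisor, Polynomial.leadingCoeff_mul, Polynomial.leadingCoeff_C,
    Polynomial.leadingCoeff_X_sub_C, mul_one]

lemma lagrange_key' {K : Type*} [Field K] {ι : Type*} [DecidableEq ι] (s : Finset ι) (v : ι → K)
    (hv : Set.InjOn v s) (Q : Polynomial K) (hQ : Q.natDegree + 1 < s.card) :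
    ∑ i ∈ s, Q.eval (v i) * (∏ j ∈ s.erase i, (v j - v i))⁻¹ = 0 := by
  have h := lagrange_key s v hv Q hQ
  have hcong : ∀ i ∈ s, Q.eval (v i) * (∏ j ∈ s.erase i, (v j - v i))⁻¹ =
      (-1 : K) ^ (s.card - 1) * (Q.eval (v i) * (∏ j ∈ s.erase i, (v i - v j))⁻¹) := by
    intro i hi
    have hprod : ∏ j ∈ s.erase i, (v j - v i) =
        (-1 : K) ^ (s.card - 1) * ∏ j ∈ s.erase i, (v i - v j) := by
      rw [← Finset.card_erase_of_mem hi, ← Finset.prod_const (-1 : K),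
        ← Finset.prod_mul_distrib]
      exact Finset.prod_congr rfl fun j _ => by ring
    rw [hprod, mul_inv, ← inv_pow, inv_neg, inv_one]
    ring
  rw [Finset.sum_congr rfl hcong, ← Finset.mul_sum, h, mul_zero]

lemma prod_split {M : Type*} [CommMonoid M] (F : ℤ → M) {l k m : ℤ}
    (hlk : l ≤ k) (hkm : k ≤ m) (hlm : l < m) :
    (∏ y ∈ Finset.Icc k (m - 1), F y) * ∏ y ∈ Finset.Icc (l + 1) k, F y
      = F k * ∏ y ∈ Finset.Icc (l + 1) (m - 1), F y := by
  rcases eq_or_lt_of_le hkm with rfl | hkm'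
  · rw [Finset.Icc_eq_empty (by omega), Finset.prod_empty, one_mul]
    rw [show Finset.Icc (l + 1) k = insert k (Finset.Icc (l + 1) (k - 1)) by ext z; simp; omega,
      Finset.prod_insert (by simp)]
  · rw [show Finset.Icc k (m - 1) = insert k (Finset.Icc (k + 1) (m - 1)) by ext z; simp; omega,
      Finset.prod_insert (by simp), mul_assoc]
    congr 1
    rw [mul_comm, ← Finset.prod_union (Finset.disjoint_left.mpr fun z hz1 hz2 => by
      simp only [Finset.mem_Icc] at hz1 hz2; omega)]
    exact Finset.prod_congr (by ext z; simp; omega) fun _ _ => rfl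

lemma prod_split2 {M : Type*} [CommMonoid M] (F : ℤ → M) {l k m : ℤ}
    (hlk : l ≤ k) (hkm : k ≤ m) :
    (∏ y ∈ Finset.Icc (k + 1) m, F y) * ∏ y ∈ Finset.Icc l (k - 1), F y
      = ∏ y ∈ (Finset.Icc l m).erase k, F y := by
  rw [mul_comm, ← Finset.prod_union (Finset.disjoint_left.mpr fun z hz1 hz2 => by
    simp only [Finset.mem_Icc] at hz1 hz2; omega)]
  exact Finset.prod_congr (by ext z; simp; omega) fun _ _ => rfl

end Aux

/-- Krattenthaler's one-dimensional matrix inverse (formula (3.4)):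
the lower-triangular matrices `f` and `g` are inverses of each other. -/
theorem matrix_inversion_one_dim
    (K : Type*) [Field K] (b : K) (a c : ℤ → K)
    (hc0 : ∀ k : ℤ, c k ≠ 0)
    (hcc : ∀ k l : ℤ, k ≠ l → c k ≠ c l)
    (hac : ∀ k l : ℤ, a k ≠ c l)
    (hab : ∀ k l : ℤ, a k * c l ≠ b)
    (hcb : ∀ k l : ℤ, c k * c l ≠ b)
    (f g : ℤ → ℤ → K)
    (hf : ∀ m k : ℤ, f m k =
      if k ≤ m then
        (∏ y ∈ Finset.Icc k (m - 1), ((a y - b / c k) * (a y - c k))) /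
          (∏ y ∈ Finset.Icc (k + 1) m, ((c y - b / c k) * (c y - c k)))
      else 0)
    (hg : ∀ k l : ℤ, g k l =
      if l ≤ k then
        ((b - a l * c l) * (a l - c l)) / ((b - a k * c k) * (a k - c k)) *
          ((∏ y ∈ Finset.Icc (l + 1) k, ((a y - b / c k) * (a y - c k))) /
            (∏ y ∈ Finset.Icc l (k - 1), ((c y - b / c k) * (c y - c k))))
      else 0) :
    ∀ m l : ℤ,
      (∑ k ∈ Finset.Icc l m, f m k * g k l) = if m = l then 1 else 0 := by
  have hw : ∀ j : ℤ, (b - a j * c j) * (a j - c j) ≠ 0 := fun j =>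
    mul_ne_zero (sub_ne_zero.mpr fun h => hab j j h.symm) (sub_ne_zero.mpr (hac j j))
  intro m l
  rcases lt_trichotomy m l with hml | rfl | hlm
  · rw [Finset.Icc_eq_empty (by omega), Finset.sum_empty, if_neg (by omega)]
  · rw [Finset.Icc_self, Finset.sum_singleton, if_pos rfl, hf, hg, if_pos le_rfl, if_pos le_rfl,
      Finset.Icc_eq_empty (by omega : ¬ (m : ℤ) ≤ m - 1),
      Finset.Icc_eq_empty (by omega : ¬ (m : ℤ) + 1 ≤ m)]
    simp [div_self (hw m)]
  · rw [if_neg (by omega)]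
    -- main case l < m
    set X : ℤ → K := fun j => c j + b / c j with hX
    have hxne : ∀ j k : ℤ, j ≠ k → X j ≠ X k := by
      intro j k hjk heq
      have h1 : (c j - c k) * (c j * c k - b) = (X j - X k) * (c j * c k) := by
        have hj := hc0 j; have hk := hc0 k
        simp only [hX]
        field_simp
        ring
      rw [heq, sub_self, zero_mul] at h1
      exact mul_ne_zero (sub_ne_zero.mpr (hcc j k hjk)) (sub_ne_zero.mpr (hcb j k)) h1
    set Q : Polynomial K :=
      ∏ y ∈ Finset.Icc (l + 1) (m - 1),
        (Polynomial.C (a y * a y + b) - Polynomial.C (a y) * Polynomial.X) with hQ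
    have hQdeg : Q.natDegree ≤ (Finset.Icc (l + 1) (m - 1)).card := by
      refine le_trans (Polynomial.natDegree_prod_le _ _) ?_
      refine le_trans (Finset.sum_le_card_nsmul _ _ 1 fun y _ => ?_) (by simp)
      refine le_trans (Polynomial.natDegree_sub_le _ _) ?_
      simp only [Polynomial.natDegree_C, max_le_iff]
      exact ⟨Nat.zero_le _, le_trans (Polynomial.natDegree_mul_le) (by simp)⟩
    have hQlt : Q.natDegree + 1 < (Finset.Icc l m).card := by
      have h1 := hQdeg
      rw [Int.card_Icc] at h1 ⊢
      omega
    have hinj : Set.InjOn X (Finset.Icc l m : Set ℤ) := by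
      intro p _ q _ h
      by_contra hpq
      exact hxne p q hpq h
    set CC := ∏ y ∈ Finset.Icc l m, c y with hCC
    have hCCne : CC ≠ 0 := Finset.prod_ne_zero_iff.mpr fun y _ => hc0 y
    have hterm : ∀ k ∈ Finset.Icc l m, f m k * g k l =
        (-((b - a l * c l) * (a l - c l)) / CC) *
          (Q.eval (X k) * (∏ j ∈ (Finset.Icc l m).erase k, (X j - X k))⁻¹) := by
      intro k hk
      obtain ⟨hlk, hkm⟩ := Finset.mem_Icc.mp hk
      have hck := hc0 k
      have hPhi : ∀ y : ℤ, (a y - b / c k) * (a y - c k) = a y * a y + b - a y * X k := by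
        intro y; simp only [hX]; field_simp; ring
      have hPsi : ∀ y : ℤ, (c y - b / c k) * (c y - c k) = c y * (X y - X k) := by
        intro y; have hcy := hc0 y; simp only [hX]; field_simp; ring
      have hPhik : (a k - b / c k) * (a k - c k) = -((b - a k * c k) * (a k - c k)) / c k := by
        field_simp; ring
      have hAC : (∏ y ∈ Finset.Icc k (m - 1), ((a y - b / c k) * (a y - c k))) *
          ∏ y ∈ Finset.Icc (l + 1) k, ((a y - b / c k) * (a y - c k))
          = (-((b - a k * c k) * (a k - c k)) / c k) * Q.eval (X k) := by
        rw [prod_split (fun y => (a y - b / c k) * (a y - c k)) hlk hkm hlm, hPhik]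
        congr 1
        rw [hQ, Polynomial.eval_prod]
        refine Finset.prod_congr rfl fun y _ => ?_
        rw [hPhi y]; simp
      have hBD : (∏ y ∈ Finset.Icc (k + 1) m, ((c y - b / c k) * (c y - c k))) *
          ∏ y ∈ Finset.Icc l (k - 1), ((c y - b / c k) * (c y - c k))
          = (CC / c k) * ∏ j ∈ (Finset.Icc l m).erase k, (X j - X k) := by
        rw [prod_split2 (fun y => (c y - b / c k) * (c y - c k)) hlk hkm,
          Finset.prod_congr rfl fun y _ => hPsi y, Finset.prod_mul_distrib]
        congr 1
        rw [eq_div_iff hck]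
        exact Finset.prod_erase_mul _ _ hk
      have hPx : (∏ j ∈ (Finset.Icc l m).erase k, (X j - X k)) ≠ 0 :=
        Finset.prod_ne_zero_iff.mpr fun j hj =>
          sub_ne_zero.mpr (hxne j k (Finset.mem_erase.mp hj).1)
      rw [hf, hg, if_pos hkm, if_pos hlk]
      set A := ∏ y ∈ Finset.Icc k (m - 1), ((a y - b / c k) * (a y - c k)) with hA
      set B := ∏ y ∈ Finset.Icc (k + 1) m, ((c y - b / c k) * (c y - c k)) with hB
      set Cp := ∏ y ∈ Finset.Icc (l + 1) k, ((a y - b / c k) * (a y - c k)) with hCp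
      set D := ∏ y ∈ Finset.Icc l (k - 1), ((c y - b / c k) * (c y - c k)) with hD
      set Px := ∏ j ∈ (Finset.Icc l m).erase k, (X j - X k) with hPxdef
      rw [div_mul_div_comm, div_mul_div_comm,
        show A * ((b - a l * c l) * (a l - c l) * Cp) =
          A * Cp * ((b - a l * c l) * (a l - c l)) by ring,
        show B * ((b - a k * c k) * (a k - c k) * D) =
          B * D * ((b - a k * c k) * (a k - c k)) by ring,
        hAC, hBD]
      have hwk := hw k
      set W := (b - a k * c k) * (a k - c k) with hW
      field_simp [hck, hwk, hPx, hCCne]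
    rw [Finset.sum_congr rfl hterm, ← Finset.mul_sum,
      lagrange_key' (Finset.Icc l m) X hinj Q hQlt, mul_zero]
end

section
/- Let K be a field, n ≥ 1, let t ∈ K be nonzero, let v_1, …, v_n ∈ K be pairwise distinct, and let u_1, …, u_{n+1} ∈ K be such that t u_k ≠ v_i for all 1 ≤ k ≤ n+1 and 1 ≤ i ≤ n. Then (∏_{1≤i<j≤n} (v_i − v_j))^{−1} · det_{1≤i,j≤n}[v_i^{n−j} · (1 − t^j · ∏_{k=1}^{n+1} (u_k − v_i)/(t u_k − v_i))] = Σ_{K ⊆ {1,…,n}} (−1)^{|K|} · (1/t)^{|K|(|K|+1)/2} · ∏_{k ∈ K, j ∉ K} (v_j − v_k/t)/(v_j − v_k) · ∏_{i=1}^{n+1} ∏_{k ∈ K} (u_i − v_k)/(u_i − v_k/t). -/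
open Finset

private lemma prod_ite_Ioi {M : Type*} [CommMonoid M] {n : ℕ} (i : Fin n) (f : Fin n → M) :
    (∏ j, if i < j then f j else 1) = ∏ j ∈ Ioi i, f j := by
  rw [← Fintype.prod_ite_mem (Ioi i) f]
  exact Finset.prod_congr rfl fun j _ => by simp [Finset.mem_Ioi]

private lemma prod_Ioi_eq_prod_pairs {M : Type*} [CommMonoid M] {n : ℕ} (f : Fin n → Fin n → M) :
    ∏ i, ∏ j ∈ Ioi i, f i j
      = ∏ p ∈ Finset.univ.filter (fun p : Fin n × Fin n => p.1 < p.2), f p.1 p.2 := by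
  rw [Finset.prod_filter, Fintype.prod_prod_type]
  exact Finset.prod_congr rfl fun i _ => (prod_ite_Ioi i (f i)).symm

private lemma det_revVandermonde {R : Type*} [CommRing R] {n : ℕ} (x : Fin n → R) :
    Matrix.det (Matrix.of fun i j : Fin n => x i ^ (n - 1 - j.val))
      = ∏ i, ∏ j ∈ Ioi i, (x i - x j) := by
  have h2 : (Matrix.of fun i j : Fin n => x i ^ (n - 1 - j.val)).submatrix
      (Fin.revPerm : Fin n ≃ Fin n) (Fin.revPerm : Fin n ≃ Fin n)
      = Matrix.vandermonde (fun i => x (Fin.rev i)) := by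
    ext i j
    simp only [Matrix.submatrix_apply, Matrix.of_apply, Matrix.vandermonde_apply,
      Fin.revPerm_apply]
    congr 1
    rw [Fin.val_rev]
    omega
  have h := Matrix.det_submatrix_equiv_self (Fin.revPerm : Fin n ≃ Fin n)
    (Matrix.of fun i j : Fin n => x i ^ (n - 1 - j.val))
  rw [h2, Matrix.det_vandermonde] at h
  rw [← h, prod_Ioi_eq_prod_pairs, prod_Ioi_eq_prod_pairs]
  refine Finset.prod_nbij' (fun p => (p.2.rev, p.1.rev)) (fun p => (p.2.rev, p.1.rev))
    ?_ ?_ ?_ ?_ ?_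
  · intro p hp; simp only [Finset.mem_filter, Finset.mem_univ, true_and] at hp ⊢
    exact Fin.rev_lt_rev.mpr hp
  · intro p hp; simp only [Finset.mem_filter, Finset.mem_univ, true_and] at hp ⊢
    exact Fin.rev_lt_rev.mpr hp
  · intro p _; simp [Fin.rev_rev]
  · intro p _; simp [Fin.rev_rev]
  · intro p _; simp [Fin.rev_rev]

private lemma card_filter_lt_product {α : Type*} [LinearOrder α] [DecidableEq α]
    (s : Finset α) :
    ((s ×ˢ s).filter fun p => p.1 < p.2).card = s.card.choose 2 := by
  have hswap : ((s ×ˢ s).filter fun p => p.2 < p.1).card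
      = ((s ×ˢ s).filter fun p => p.1 < p.2).card := by
    refine Finset.card_nbij' Prod.swap Prod.swap ?_ ?_ ?_ ?_ <;>
      simp +contextual [Set.MapsTo, Set.LeftInvOn, Set.RightInvOn, Finset.mem_filter, Finset.mem_product, and_comm]
  have hunion : s.offDiag = ((s ×ˢ s).filter fun p => p.1 < p.2)
      ∪ ((s ×ˢ s).filter fun p => p.2 < p.1) := by
    ext p
    simp only [Finset.mem_offDiag, Finset.mem_union, Finset.mem_filter, Finset.mem_product]
    constructor
    · rintro ⟨h1, h2, h3⟩
      rcases h3.lt_or_gt with h | h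
      · exact Or.inl ⟨⟨h1, h2⟩, h⟩
      · exact Or.inr ⟨⟨h1, h2⟩, h⟩
    · rintro (⟨⟨h1, h2⟩, h⟩ | ⟨⟨h1, h2⟩, h⟩)
      · exact ⟨h1, h2, ne_of_lt h⟩
      · exact ⟨h1, h2, ne_of_gt h⟩
  have hdisj : Disjoint ((s ×ˢ s).filter fun p => p.1 < p.2)
      ((s ×ˢ s).filter fun p => p.2 < p.1) := by
    rw [Finset.disjoint_left]
    intro p hp hq
    simp only [Finset.mem_filter] at hp hq
    exact absurd hq.2 (asymm hp.2)
  have hcard := s.offDiag_card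
  rw [hunion, Finset.card_union_of_disjoint hdisj, hswap] at hcard
  have htri : s.card * s.card - s.card = s.card * (s.card - 1) := by
    have h := Nat.mul_sub s.card s.card 1
    simpa using h.symm
  rw [htri] at hcard
  rw [Nat.choose_two_right]
  omega

private lemma nat_tri (k : ℕ) : k + k.choose 2 = k * (k + 1) / 2 := by
  rw [Nat.choose_two_right, ← Finset.sum_range_id]
  have : k * (k + 1) / 2 = (k + 1) * ((k + 1) - 1) / 2 := by
    rw [Nat.succ_sub_one, mul_comm]
  rw [this, ← Finset.sum_range_id, Finset.sum_range_succ]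
  exact Nat.add_comm _ _

set_option maxHeartbeats 1000000 in
/-- The determinant expansion (5.2) for the last factor of the coefficient
`C^{(q,t)}_θ(u)`, as a sum over subsets of `{1,…,n}`. -/
theorem det_expansion_C_factor
    (Kf : Type*) [Field Kf] (n : ℕ) (hn : 1 ≤ n)
    (t : Kf) (ht : t ≠ 0) (v : Fin n → Kf) (u : Fin (n + 1) → Kf)
    (hv : ∀ i j : Fin n, i ≠ j → v i ≠ v j)
    (htu : ∀ (k : Fin (n + 1)) (i : Fin n), t * u k ≠ v i) :
    (∏ i : Fin n, ∏ j : Fin n, if i < j then v i - v j else 1)⁻¹ *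
      Matrix.det (Matrix.of fun i j : Fin n =>
        v i ^ (n - 1 - j.val) *
          (1 - t ^ (j.val + 1) *
            ∏ k : Fin (n + 1), (u k - v i) / (t * u k - v i))) =
    ∑ K : Finset (Fin n),
      (-1 : Kf) ^ K.card * (1 / t) ^ (K.card * (K.card + 1) / 2) *
        (∏ k ∈ K, ∏ j ∈ Kᶜ, (v j - v k / t) / (v j - v k)) *
        ∏ i : Fin (n + 1), ∏ k ∈ K, (u i - v k) / (u i - v k / t) := by
  classical
  have hvne : ∀ {i j : Fin n}, i ≠ j → v i - v j ≠ 0 :=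
    fun h => sub_ne_zero_of_ne (hv _ _ h)
  set Q : Fin n → Kf := fun i => ∏ k, (u k - v i) / (u k - v i / t) with hQ
  have hden : ∀ (k : Fin (n + 1)) (i : Fin n), u k - v i / t ≠ 0 := by
    intro k i h
    apply htu k i
    have h2 : t * u k - v i = t * (u k - v i / t) := by field_simp
    rw [h, mul_zero] at h2
    exact sub_eq_zero.mp h2
  set c : Fin n → Kf := fun i => -(1 / t) * Q i with hc
  set E : Kf := ∏ i, ∏ j ∈ Ioi i, (v i - v j) with hE
  have hE0 : E ≠ 0 := by
    rw [hE]
    refine Finset.prod_ne_zero_iff.mpr fun i _ => Finset.prod_ne_zero_iff.mpr fun j hj => ?_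
    exact hvne (Finset.mem_Ioi.mp hj).ne
  -- the prefactor equals E
  have hpref : (∏ i : Fin n, ∏ j : Fin n, if i < j then v i - v j else 1) = E := by
    rw [hE]
    exact Finset.prod_congr rfl fun i _ => prod_ite_Ioi i _
  -- the per-row factorization of the matrix entries
  have hrow : ∀ (i j : Fin n),
      v i ^ (n - 1 - j.val) * (1 - t ^ (j.val + 1) *
        ∏ k, (u k - v i) / (t * u k - v i))
      = c i * (v i / t) ^ (n - 1 - j.val) + v i ^ (n - 1 - j.val) := by
    intro i j
    have hP : (∏ k : Fin (n + 1), (u k - v i) / (t * u k - v i)) = (1 / t) ^ (n + 1) * Q i := by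
      rw [hQ]
      have : ((1 : Kf) / t) ^ (n + 1) = ∏ _k : Fin (n + 1), (1 / t) := by
        rw [Finset.prod_const, Finset.card_univ, Fintype.card_fin]
      rw [this, ← Finset.prod_mul_distrib]
      refine Finset.prod_congr rfl fun k _ => ?_
      have h1 : t * u k - v i ≠ 0 := sub_ne_zero_of_ne (htu k i)
      have h2 : u k - v i / t ≠ 0 := hden k i
      rw [div_mul_div_comm, one_mul]
      congr 1
      field_simp
    rw [hP]
    have hnj : n + 1 = (j.val + 1) + ((n - 1 - j.val) + 1) := by have := j.isLt; omega
    have hpow : t ^ (j.val + 1) * (1 / t) ^ (n + 1)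
        = (1 / t) * (1 / t) ^ (n - 1 - j.val) := by
      have e1 : ((1 : Kf) / t) ^ (n + 1)
          = (1 / t) ^ (j.val + 1) * (1 / t) ^ ((n - 1 - j.val) + 1) := by
        rw [← pow_add]
        exact congrArg _ hnj
      have e2 : (t : Kf) ^ (j.val + 1) * (1 / t) ^ (j.val + 1) = 1 := by
        rw [one_div, ← mul_pow, mul_inv_cancel₀ ht, one_pow]
      calc t ^ (j.val + 1) * (1 / t) ^ (n + 1)
          = t ^ (j.val + 1) * (1 / t) ^ (j.val + 1)
              * (1 / t) ^ ((n - 1 - j.val) + 1) := by rw [e1]; ring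
        _ = (1 / t) ^ ((n - 1 - j.val) + 1) := by rw [e2, one_mul]
        _ = (1 / t) * (1 / t) ^ (n - 1 - j.val) := by rw [pow_succ]; ring
    have hvt : (v i / t) ^ (n - 1 - j.val)
        = v i ^ (n - 1 - j.val) * (1 / t) ^ (n - 1 - j.val) := by
      rw [div_pow, one_div, inv_pow, div_eq_mul_inv]
    rw [hvt, hc]
    linear_combination (-(v i ^ (n - 1 - j.val) * Q i)) * hpow
  -- determinant expansion over subsets
  set Brow : Fin n → Fin n → Kf := fun i j => c i * (v i / t) ^ (n - 1 - j.val) with hBrow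
  set Arow : Fin n → Fin n → Kf := fun i j => v i ^ (n - 1 - j.val) with hArow
  have hsplit : (Matrix.of fun i j : Fin n =>
      v i ^ (n - 1 - j.val) * (1 - t ^ (j.val + 1) *
        ∏ k : Fin (n + 1), (u k - v i) / (t * u k - v i)))
      = Matrix.of (Brow + Arow) := by
    ext i j
    simpa using hrow i j
  rw [hsplit]
  have hdetsum : Matrix.det (Matrix.of (Brow + Arow))
      = ∑ s : Finset (Fin n), Matrix.det (Matrix.of (s.piecewise Brow Arow)) :=
    (Matrix.detRowAlternating :
      (Fin n → Kf) [⋀^Fin n]→ₗ[Kf] Kf).toMultilinearMap.map_add_univ Brow Arow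
  rw [hdetsum, hpref, Finset.mul_sum]
  refine Finset.sum_congr rfl fun s _ => ?_
  -- compute each term
  set w : Fin n → Kf := s.piecewise (fun i => v i / t) v with hw
  have hpiece : Matrix.of (s.piecewise Brow Arow)
      = Matrix.of fun i j : Fin n => (if i ∈ s then c i else 1) * w i ^ (n - 1 - j.val) := by
    ext i j
    by_cases h : i ∈ s
    · simp [Finset.piecewise_eq_of_mem _ _ _ h, hBrow, hw, h]
    · simp [Finset.piecewise_eq_of_notMem _ _ _ h, hArow, hw, h]
  rw [hpiece]
  rw [show (Matrix.of fun i j : Fin n =>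
        (if i ∈ s then c i else 1) * w i ^ (n - 1 - j.val))
      = Matrix.of fun i j : Fin n => (if i ∈ s then c i else 1) *
          (Matrix.of fun i j : Fin n => w i ^ (n - 1 - j.val)) i j from rfl]
  rw [Matrix.det_mul_column, det_revVandermonde, Fintype.prod_ite_mem]
  -- now the scalar computation
  have hpair : ∀ p : Fin n × Fin n, p.1 < p.2 →
      w p.1 - w p.2 =
        ((if p.1 ∈ s ∧ p.2 ∈ s then 1 / t else 1) *
          ((if p.1 ∈ s ∧ p.2 ∉ s then (v p.2 - v p.1 / t) / (v p.2 - v p.1) else 1) *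
            (if p.2 ∈ s ∧ p.1 ∉ s then (v p.1 - v p.2 / t) / (v p.1 - v p.2) else 1))) * (v p.1 - v p.2) := by
    rintro ⟨a, b⟩ hab
    have hne : v a - v b ≠ 0 := hvne hab.ne
    have hne' : v b - v a ≠ 0 := hvne hab.ne'
    by_cases ha : a ∈ s <;> by_cases hb : b ∈ s <;>
      simp only [hw, Finset.piecewise_eq_of_mem, Finset.piecewise_eq_of_notMem,
        ha, hb, if_pos, if_neg, and_true, and_false, true_and, false_and, not_true, not_false_iff,
        ite_true, ite_false, one_mul, mul_one] <;>
      field_simp <;> ring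
  have hwprod : (∏ i, ∏ j ∈ Ioi i, (w i - w j))
      = ((1 / t) ^ s.card.choose 2 * ∏ k ∈ s, ∏ j ∈ sᶜ, (v j - v k / t) / (v j - v k)) * E := by
    rw [hE, prod_Ioi_eq_prod_pairs, prod_Ioi_eq_prod_pairs]
    rw [Finset.prod_congr rfl fun p hp =>
      hpair p (Finset.mem_filter.mp hp).2]
    rw [Finset.prod_mul_distrib, Finset.prod_mul_distrib, Finset.prod_mul_distrib]
    congr 1
    congr 1
    · -- product of the 1/t factors
      rw [Finset.prod_ite, Finset.prod_const, Finset.prod_const_one, mul_one]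
      congr 1
      rw [show (Finset.univ.filter (fun p : Fin n × Fin n => p.1 < p.2)).filter
            (fun p => p.1 ∈ s ∧ p.2 ∈ s) = (s ×ˢ s).filter (fun p => p.1 < p.2) by
          ext p
          simp only [Finset.mem_filter, Finset.mem_univ, true_and, Finset.mem_product]
          tauto]
      exact card_filter_lt_product s
    · -- the cross factors
      rw [Finset.prod_ite, Finset.prod_const_one, mul_one,
        Finset.prod_ite, Finset.prod_const_one, mul_one]
      have e1 : (Finset.univ.filter (fun p : Fin n × Fin n => p.1 < p.2)).filter
          (fun p => p.1 ∈ s ∧ p.2 ∉ s) = (s ×ˢ sᶜ).filter (fun p => p.1 < p.2) := by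
        ext p
        simp only [Finset.mem_filter, Finset.mem_univ, true_and, Finset.mem_product,
          Finset.mem_compl]
        tauto
      have e2 : ∏ p ∈ (Finset.univ.filter (fun p : Fin n × Fin n => p.1 < p.2)).filter
            (fun p => p.2 ∈ s ∧ p.1 ∉ s), (v p.1 - v p.2 / t) / (v p.1 - v p.2)
          = ∏ p ∈ (s ×ˢ sᶜ).filter (fun p => p.2 < p.1), (v p.2 - v p.1 / t) / (v p.2 - v p.1) := by
        refine Finset.prod_nbij' Prod.swap Prod.swap ?_ ?_ ?_ ?_ ?_ <;>
          simp +contextual [Finset.mem_filter, Finset.mem_product, Finset.mem_compl]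
      rw [e1, e2]
      have e3 : (s ×ˢ sᶜ).filter (fun p : Fin n × Fin n => p.2 < p.1)
          = (s ×ˢ sᶜ).filter (fun p => ¬ p.1 < p.2) := by
        ext p
        simp only [Finset.mem_filter, Finset.mem_product, Finset.mem_compl,
          and_congr_right_iff]
        intro hp
        have hne : p.1 ≠ p.2 := fun h => hp.2 (h ▸ hp.1)
        constructor
        · exact fun h => asymm h
        · intro h; exact hne.lt_or_gt.resolve_left h
      rw [e3, Finset.prod_filter_mul_prod_filter_not, ← Finset.prod_product']
  rw [hwprod]
  -- the product of the c i over s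
  have hcprod : (∏ i ∈ s, c i)
      = (-1 : Kf) ^ s.card * (1 / t) ^ s.card *
          ∏ i : Fin (n + 1), ∏ k ∈ s, (u i - v k) / (u i - v k / t) := by
    rw [hc]
    simp only
    rw [Finset.prod_mul_distrib, Finset.prod_const, hQ, Finset.prod_comm]
    rw [show (-(1 / t) : Kf) = (-1) * (1 / t) by ring, mul_pow]
  rw [hcprod]
  set Up : Kf := ∏ i : Fin (n + 1), ∏ k ∈ s, (u i - v k) / (u i - v k / t) with hUp
  set Fp : Kf := ∏ k ∈ s, ∏ j ∈ sᶜ, (v j - v k / t) / (v j - v k) with hFp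
  have hexp : ((1 : Kf) / t) ^ s.card * (1 / t) ^ s.card.choose 2
      = (1 / t) ^ (s.card * (s.card + 1) / 2) := by
    rw [← pow_add, nat_tri]
  have hEE : E⁻¹ * E = 1 := inv_mul_cancel₀ hE0
  linear_combination ((-1 : Kf) ^ s.card * Up * Fp *
      ((1 / t) ^ s.card * (1 / t) ^ s.card.choose 2)) * hEE
    + ((-1 : Kf) ^ s.card * Up * Fp) * hexp
end

section
/- Let R be a commutative ring, let h : ℤ → R be any function, let n ≥ 1, and let λ_1, …, λ_{n+1} ∈ ℤ. Then det_{1≤i,j≤n+1}[h(λ_i − i + j)] = Σ_{θ ∈ {0,1}^n} (−1)^{θ_1+⋯+θ_n} · h(λ_{n+1} − (θ_1+⋯+θ_n)) · det_{1≤i,j≤n}[h(λ_i + θ_i − i + j)]. (In particular, when h(r) is the r-th complete homogeneous symmetric function for r ≥ 0 and h(r) = 0 for r < 0, this expresses the Jacobi–Trudi determinant for the Schur function s_{(λ_1,…,λ_{n+1})} as the signed sum Σ_θ (−1)^{|θ|} h_{λ_{n+1}−|θ|} s_{(λ_1+θ_1,…,λ_n+θ_n)}, i.e. the development of the Jacobi–Trudi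 determinant along its last row.) -/
open Finset Matrix

section
variable {S : Type*} [CommRing S]

lemma stepB {n : ℕ} (a : Fin n → ℕ → S) (x : S) :
    Matrix.det (Matrix.of fun i j : Fin n => a i j.val - x * a i (j.val + 1)) =
    ∑ k : Fin (n+1), (-x) ^ k.val *
      Matrix.det (Matrix.of fun i j : Fin n => a i ((k.rev.succAbove j).val)) := by
  set Ahat : Matrix (Fin (n+1)) (Fin (n+1)) S :=
    Matrix.of fun i j => if h : (i : ℕ) < n then a ⟨i, h⟩ j.val else x ^ (n - j.val) with hAhat
  set U : Matrix (Fin (n+1)) (Fin (n+1)) S :=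
    Matrix.of fun m j => if m = j then 1 else if (m : ℕ) = j.val + 1 then -x else 0 with hU
  have hUdet : U.det = 1 := by
    have ht : U.BlockTriangular OrderDual.toDual := by
      intro i j hij
      have hij' : (i : ℕ) < (j : ℕ) := hij
      simp only [hU, Matrix.of_apply]
      rw [if_neg (fun h => by subst h; omega), if_neg (by omega)]
    rw [Matrix.det_of_lowerTriangular U ht]
    simp [hU]
  have hprod : Ahat * U = Matrix.of fun i j : Fin (n+1) =>
      if h : (j : ℕ) < n then Ahat i j - x * Ahat i ⟨(j : ℕ) + 1, by omega⟩ else Ahat i j := by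
    ext i j
    rw [Matrix.mul_apply]
    have hsplit : ∀ m : Fin (n+1), Ahat i m * U m j =
        (if m = j then Ahat i m else 0) + (if (m : ℕ) = j.val + 1 then Ahat i m * (-x) else 0) := by
      intro m
      simp only [hU, Matrix.of_apply]
      by_cases h1 : m = j
      · subst h1
        rw [if_pos rfl, if_pos rfl, if_neg (by omega : ¬ (m:ℕ) = m.val + 1)]
        ring
      · rw [if_neg h1, if_neg h1]
        by_cases h2 : (m : ℕ) = j.val + 1
        · rw [if_pos h2, if_pos h2]; ring
        · rw [if_neg h2, if_neg h2]; ring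
    rw [Finset.sum_congr rfl fun m _ => hsplit m, Finset.sum_add_distrib]
    rw [Finset.sum_ite_eq' Finset.univ j (fun m => Ahat i m), if_pos (Finset.mem_univ j)]
    by_cases hj : (j : ℕ) < n
    · rw [Finset.sum_eq_single (⟨j.val + 1, by omega⟩ : Fin (n+1))]
      · rw [if_pos rfl]
        simp only [Matrix.of_apply, dif_pos hj]
        ring
      · intro m _ hm
        rw [if_neg (fun h => hm (by apply Fin.ext; simpa using h))]
      · intro h; exact absurd (Finset.mem_univ _) h
    · rw [Finset.sum_eq_zero, Matrix.of_apply, dif_neg hj, add_zero]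
      intro m _
      rw [if_neg (by omega)]
  set Chat : Matrix (Fin (n+1)) (Fin (n+1)) S := Matrix.of fun i j : Fin (n+1) =>
      if h : (j : ℕ) < n then Ahat i j - x * Ahat i ⟨(j : ℕ) + 1, by omega⟩ else Ahat i j
      with hChat
  rw [show (Matrix.of fun i j : Fin n => a i j.val - x * a i (j.val + 1)).det = Chat.det from ?_,
    ← hprod, Matrix.det_mul, hUdet, mul_one]
  · -- Ahat.det = ∑ ...
    rw [Matrix.det_succ_row Ahat (Fin.last n)]
    refine (Fintype.sum_bijective Fin.rev Fin.rev_bijective _ _ fun k => ?_).symm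
    have hrev : (Fin.rev k : ℕ) = n - (k : ℕ) := by
      rw [Fin.val_rev]; omega
    have hk : (k : ℕ) ≤ n := by omega
    have h1 : Ahat (Fin.last n) k.rev = x ^ (k : ℕ) := by
      simp only [hAhat, Matrix.of_apply, Fin.val_last, dif_neg (lt_irrefl n), hrev]
      congr 1
      omega
    rw [h1]
    have h2 : ((-1 : S)) ^ ((Fin.last n : ℕ) + (k.rev : ℕ)) = (-1 : S) ^ (k : ℕ) := by
      rw [Fin.val_last, hrev, show n + (n - (k : ℕ)) = 2 * (n - (k:ℕ)) + (k:ℕ) by omega,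
        pow_add, pow_mul, neg_one_sq, one_pow, one_mul]
    rw [h2, neg_pow]
    have h3 : Ahat.submatrix Fin.castSucc k.rev.succAbove =
        Matrix.of fun i j : Fin n => a i ((k.rev.succAbove j).val) := by
      ext i j
      simp only [Matrix.submatrix_apply, hAhat, Matrix.of_apply]
      rw [dif_pos (by simpa using i.isLt : ((i.castSucc : ℕ) < n))]
      congr 1
    rw [Fin.succAbove_last, h3]
  · -- det B = det Chat
    rw [Matrix.det_succ_row Chat (Fin.last n)]
    rw [Finset.sum_eq_single (Fin.last n)]
    · have hll : Chat (Fin.last n) (Fin.last n) = 1 := by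
        simp only [hChat, Matrix.of_apply, Fin.val_last, dif_neg (lt_irrefl n), hAhat,
          Nat.sub_self, pow_zero]
      rw [hll, mul_one, Fin.succAbove_last, Fin.val_last,
        show ((-1 : S)) ^ (n + n) = 1 by
          rw [show n + n = 2 * n by omega, pow_mul, neg_one_sq, one_pow],
        one_mul]
      congr 1
      ext i j
      simp only [Matrix.submatrix_apply, hChat, Matrix.of_apply]
      rw [dif_pos (by simpa using j.isLt : ((j.castSucc : ℕ) < n))]
      simp only [hAhat, Matrix.of_apply]
      rw [dif_pos (by simpa using i.isLt : ((i.castSucc : ℕ) < n)),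
        dif_pos (by simpa using i.isLt : ((i.castSucc : ℕ) < n))]
      have : (⟨(i.castSucc : ℕ), by simpa using i.isLt⟩ : Fin n) = i := by
        apply Fin.ext; simp
      rw [this]
      simp
    · intro j _ hj
      have hz : Chat (Fin.last n) j = 0 := by
        have hjn : (j : ℕ) < n := by
          have := j.isLt
          have : (j : ℕ) ≠ n := fun h => hj (Fin.ext (by simpa using h))
          omega
        simp only [hChat, Matrix.of_apply, dif_pos hjn, hAhat, Fin.val_last,
          dif_neg (lt_irrefl n)]
        rw [← pow_succ', show n - ((j : ℕ) + 1) + 1 = n - (j : ℕ) by omega, sub_self]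
      rw [hz]
      ring
    · intro h; exact absurd (Finset.mem_univ _) h

lemma stepA {n : ℕ} (a : Fin n → ℕ → S) (x : S) :
    Matrix.det (Matrix.of fun i j : Fin n => a i j.val - x * a i (j.val + 1)) =
    ∑ θ : Fin n → Fin 2, (-x) ^ (∑ i, (θ i).val) *
      Matrix.det (Matrix.of fun i j : Fin n => a i (j.val + (θ i).val)) := by
  have key : ∀ (M : Fin n → Fin n → S), Matrix.det (Matrix.of M) = Matrix.detRowAlternating M :=
    fun _ => rfl
  rw [key]
  have h1 : (fun i (j : Fin n) => a i j.val - x * a i (j.val + 1)) =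
      fun i => ∑ t : Fin 2, (-x) ^ t.val • (fun j : Fin n => a i (j.val + t.val)) := by
    ext i j
    simp [Fin.sum_univ_two, sub_eq_add_neg]
  rw [h1]
  rw [show (Matrix.detRowAlternating (fun i => ∑ t : Fin 2, (-x) ^ t.val • (fun j : Fin n => a i (j.val + t.val)))) = Matrix.detRowAlternating.toMultilinearMap (fun i => ∑ t : Fin 2, (-x) ^ t.val • (fun j : Fin n => a i (j.val + t.val))) from rfl]
  rw [MultilinearMap.map_sum]
  refine Finset.sum_congr rfl fun θ _ => ?_
  rw [show (Matrix.detRowAlternating.toMultilinearMap (fun i => (-x) ^ (θ i).val • (fun j : Fin n => a i (j.val + (θ i).val)))) = Matrix.detRowAlternating.toMultilinearMap (fun i => (fun i => (-x) ^ (θ i).val) i • (fun i => fun j : Fin n => a i (j.val + (θ i).val)) i) from rfl]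
  rw [MultilinearMap.map_smul_univ]
  rw [Finset.prod_pow_eq_pow_sum]
  rw [key]
  simp [smul_eq_mul]

end

lemma keyL {R : Type*} [CommRing R] {n : ℕ} (a : Fin n → ℕ → R) (k : Fin (n + 1)) :
    (∑ θ : Fin n → Fin 2, if (∑ i, (θ i).val) = k.val
        then Matrix.det (Matrix.of fun i j : Fin n => a i (j.val + (θ i).val)) else 0)
    = Matrix.det (Matrix.of fun i j : Fin n => a i ((k.rev.succAbove j).val)) := by
  have hmap : ∀ (b : Fin n → Fin n → R),
      Matrix.det (Matrix.of fun i j => Polynomial.C (b i j))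
        = Polynomial.C (Matrix.det (Matrix.of b)) := by
    intro b
    rw [show (Matrix.of fun i j => Polynomial.C (b i j))
        = Polynomial.C.mapMatrix (Matrix.of b) from rfl, ← RingHom.map_det]
  have hpoly := (stepA (S := Polynomial R) (fun i m => Polynomial.C (a i m))
      Polynomial.X).symm.trans
    (stepB (S := Polynomial R) (fun i m => Polynomial.C (a i m)) Polynomial.X)
  simp only [hmap] at hpoly
  have hterm : ∀ (m : ℕ) (c : R),
      ((-Polynomial.X : Polynomial R) ^ m * Polynomial.C c).coeff k.val
        = if (m = k.val) then (-1 : R) ^ k.val * c else 0 := by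
    intro m c
    have : ((-Polynomial.X) ^ m * Polynomial.C c : Polynomial R)
        = Polynomial.C ((-1) ^ m * c) * Polynomial.X ^ m := by
      rw [neg_pow, _root_.map_mul, _root_.map_pow, _root_.map_neg, _root_.map_one]
      ring
    rw [this, Polynomial.coeff_C_mul, Polynomial.coeff_X_pow]
    split_ifs with h1 h2 h2
    · rw [h2, mul_one]
    · omega
    · omega
    · rw [mul_zero]
  have hco := congrArg (fun p => Polynomial.coeff p k.val) hpoly
  simp only [Polynomial.finset_sum_coeff, hterm] at hco
  rw [Finset.sum_eq_single k] at hco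
  · rw [if_pos rfl] at hco
    have h3 : ∀ θ : Fin n → Fin 2,
        (if (∑ i, (θ i).val) = k.val then (-1 : R) ^ k.val
            * Matrix.det (Matrix.of fun i j : Fin n => a i (j.val + (θ i).val)) else 0)
        = (-1 : R) ^ k.val * (if (∑ i, (θ i).val) = k.val
            then Matrix.det (Matrix.of fun i j : Fin n => a i (j.val + (θ i).val)) else 0) := by
      intro θ
      split_ifs <;> simp
    rw [Finset.sum_congr rfl fun θ _ => h3 θ, ← Finset.mul_sum] at hco
    have h4 := congrArg (fun z => ((-1 : R) ^ k.val) * z) hco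
    simpa [← mul_assoc, ← mul_pow] using h4
  · intro b _ hb
    rw [if_neg (fun hh => hb (Fin.ext hh))]
  · intro hh
    exact absurd (Finset.mem_univ _) hh


/-- Development of the Jacobi–Trudi determinant along its last row: for any function
`h : ℤ → R`, the `(n+1) × (n+1)` Jacobi–Trudi determinant equals the signed sum over
`θ ∈ {0,1}^n` of `h(λ_{n+1} - |θ|)` times the `n × n` determinant with shifted indices. -/
theorem jacobi_trudi_last_row_expansion
    (R : Type*) [CommRing R] (h : ℤ → R) (n : ℕ) (hn : 1 ≤ n)
    (lam : Fin (n + 1) → ℤ) :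
    Matrix.det (Matrix.of fun i j : Fin (n + 1) => h (lam i - i.val + j.val)) =
      ∑ θ : Fin n → Fin 2,
        (-1 : R) ^ (∑ i, (θ i).val) *
          h (lam (Fin.last n) - (∑ i, ((θ i).val : ℤ))) *
          Matrix.det (Matrix.of fun i j : Fin n =>
            h (lam i.castSucc + (θ i).val - i.val + j.val)) := by
  set a : Fin n → ℕ → R := fun i m => h (lam i.castSucc - (i : ℕ) + (m : ℕ)) with ha
  have hsum : ∀ θ : Fin n → Fin 2, (∑ i, (θ i).val) ≤ n := by
    intro θ
    calc (∑ i, (θ i).val) ≤ ∑ _i : Fin n, 1 := Finset.sum_le_sum (fun i _ => by omega)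
    _ = n := by simp
  have hL : Matrix.det (Matrix.of fun i j : Fin (n + 1) => h (lam i - i.val + j.val))
      = ∑ k : Fin (n+1), (-1 : R) ^ k.val * h (lam (Fin.last n) - (k.val : ℤ)) *
          Matrix.det (Matrix.of fun i j : Fin n => a i ((k.rev.succAbove j).val)) := by
    rw [Matrix.det_succ_row _ (Fin.last n)]
    refine (Fintype.sum_bijective Fin.rev Fin.rev_bijective _ _ fun k => ?_).symm
    have hk : (k : ℕ) ≤ n := by omega
    have hrev : (Fin.rev k : ℕ) = n - (k : ℕ) := by rw [Fin.val_rev]; omega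
    have e1 : ((-1 : R)) ^ ((Fin.last n : ℕ) + (k.rev : ℕ)) = (-1 : R) ^ (k : ℕ) := by
      rw [Fin.val_last, hrev, show n + (n - (k : ℕ)) = 2 * (n - (k:ℕ)) + (k:ℕ) by omega,
        pow_add, pow_mul, neg_one_sq, one_pow, one_mul]
    have e2 : (Matrix.of fun i j : Fin (n + 1) => h (lam i - i.val + j.val))
          (Fin.last n) k.rev = h (lam (Fin.last n) - (k.val : ℤ)) := by
      simp only [Matrix.of_apply, Fin.val_last, hrev]
      congr 1
      omega
    have e3 : ((Matrix.of fun i j : Fin (n + 1) => h (lam i - i.val + j.val)).submatrix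
          (Fin.last n).succAbove k.rev.succAbove)
        = Matrix.of fun i j : Fin n => a i ((k.rev.succAbove j).val) := by
      rw [Fin.succAbove_last]
      ext i j
      simp only [Matrix.submatrix_apply, Matrix.of_apply, ha]
      congr 2
    rw [e1, e2, e3]
  rw [hL]
  have hdM : ∀ θ : Fin n → Fin 2,
      (Matrix.of fun i j : Fin n => h (lam i.castSucc + (θ i).val - i.val + j.val))
        = Matrix.of fun i j : Fin n => a i (j.val + (θ i).val) := by
    intro θ
    ext i j
    simp only [Matrix.of_apply, ha]
    congr 1
    push_cast
    ring
  have step1 : ∀ θ : Fin n → Fin 2,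
      (-1 : R) ^ (∑ i, (θ i).val) * h (lam (Fin.last n) - (∑ i, ((θ i).val : ℤ))) *
          Matrix.det (Matrix.of fun i j : Fin n =>
            h (lam i.castSucc + (θ i).val - i.val + j.val))
      = ∑ k : Fin (n+1), (if (∑ i, (θ i).val) = k.val
          then (-1 : R) ^ k.val * h (lam (Fin.last n) - (k.val : ℤ)) *
            Matrix.det (Matrix.of fun i j : Fin n => a i (j.val + (θ i).val)) else 0) := by
    intro θ
    rw [Finset.sum_eq_single (⟨∑ i, (θ i).val, by have := hsum θ; omega⟩ : Fin (n+1))]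
    · rw [if_pos rfl, hdM θ]
      congr 2
      push_cast
      ring
    · intro b _ hb
      rw [if_neg (fun hh => hb (Fin.ext hh.symm))]
    · intro hh
      exact absurd (Finset.mem_univ _) hh
  rw [Finset.sum_congr rfl fun θ _ => step1 θ, Finset.sum_comm]
  refine Finset.sum_congr rfl fun k _ => ?_
  rw [← keyL a k, Finset.mul_sum]
  refine Finset.sum_congr rfl fun θ _ => ?_
  split_ifs <;> simp
end

section
/- Let n ≥ 1, let t ∈ ℝ with t ∉ {0, 1}, and let u_1, …, u_n ∈ ℝ satisfy: u_i ∉ {0, 1, 1/t} and t^2 u_i ≠ 1 for all i, and u_i ≠ u_j, u_i ≠ t u_j, t u_i ≠ u_j for all i ≠ j. Fix θ ∈ {0,1}^n and set u_{n+1} = 1/t. For q ∈ ℝ define v_k(q) = q^{θ_k} u_k for 1 ≤ k ≤ n, and define C(q) = ∏_{k=1}^n [t^{θ_k} · ((q/t;q)_{θ_k}/(q;q)_{θ_k}) · ((q u_k;q)_{θ_k}/(q t u_k;q)_{θ_k})] · ∏_{1≤i<j≤n} [((q u_i/(t u_j);q)_{θ_i}/(q u_i/u_j;q)_{θ_i})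 · ((t u_i/v_j(q);q)_{θ_i}/(u_i/v_j(q);q)_{θ_i})] · (∏_{1≤i<j≤n}(v_i(q) − v_j(q)))^{−1} · det_{1≤i,j≤n}[v_i(q)^{n−j} · (1 − t^j · ∏_{k=1}^{n+1} (u_k − v_i(q))/(t u_k − v_i(q)))], where (a;q)_m = ∏_{j=0}^{m−1}(1 − a q^j). Then C(q) tends to (−1)^{θ_1+⋯+θ_n} as q tends to t with q ≠ t. -/
open Finset Filter Topology

/-- The `q`-shifted factorial `(a;q)_m = ∏_{j=0}^{m-1} (1 - a q^j)`. -/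
def qPoch (q a : ℝ) (m : ℕ) : ℝ :=
  ∏ j ∈ Finset.range m, (1 - a * q ^ j)

noncomputable def Rfun (n : ℕ) (t : ℝ) (u : Fin n → ℝ) (i : Fin n) (q : ℝ) : ℝ :=
  (∏ l ∈ Finset.univ.erase i, (u l - q * u i) / (t * u l - q * u i)) *
    ((1 / t - q * u i) / (1 - q * u i))

noncomputable def Nmat (n : ℕ) (t : ℝ) (u : Fin n → ℝ) (θ : Fin n → ℕ) (q : ℝ) :
    Matrix (Fin n) (Fin n) ℝ :=
  Matrix.of fun i j =>
    if θ i = 0 then u i ^ (n - 1 - j.val)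
    else (q * u i) ^ (n - 1 - j.val) *
      ((t - q) - t ^ (j.val + 1) * ((1 - q) * Rfun n t u i q))

noncomputable def Phi (n : ℕ) (t : ℝ) (u : Fin n → ℝ) (θ : Fin n → ℕ) (q : ℝ) : ℝ :=
  (∏ k : Fin n, if θ k = 0 then 1 else (1 - q * u k) / ((1 - q) * (1 - q * t * u k))) *
  (∏ i : Fin n, ∏ j : Fin n, if i < j then
      (qPoch q (q * u i / (t * u j)) (θ i) / qPoch q (q * u i / u j) (θ i)) *
        (qPoch q (t * u i / (q ^ (θ j) * u j)) (θ i) /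
          qPoch q (u i / (q ^ (θ j) * u j)) (θ i))
    else 1) *
  (∏ i : Fin n, ∏ j : Fin n, if i < j then q ^ (θ i) * u i - q ^ (θ j) * u j else 1)⁻¹ *
  (Nmat n t u θ q).det

lemma prod_Ioi_eq_if {n : ℕ} (i : Fin n) (f : Fin n → ℝ) :
    ∏ j ∈ Finset.Ioi i, f j = ∏ j, if i < j then f j else 1 := by
  have : Finset.Ioi i = univ.filter (fun j => i < j) := by ext j; simp
  rw [this, Finset.prod_filter]

lemma prod_erase_eq_if {n : ℕ} (i : Fin n) (f : Fin n → ℝ) :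
    ∏ j ∈ univ.erase i, f j = ∏ j, if j ≠ i then f j else 1 := by
  have : (univ : Finset (Fin n)).erase i = univ.filter (fun j => j ≠ i) := by ext j; simp
  rw [this, Finset.prod_filter]

lemma if_mul_if {c : Prop} [Decidable c] (a b : ℝ) :
    (if c then a else 1) * (if c then b else 1) = if c then a * b else 1 := by
  split <;> simp

lemma prod_erase_pair {n : ℕ} (f : Fin n → Fin n → ℝ) :
    ∏ i, ∏ j ∈ univ.erase i, f i j = ∏ i, ∏ j, if i < j then f i j * f j i else 1 := by
  have step1 : ∀ i : Fin n, ∏ j ∈ univ.erase i, f i j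
      = (∏ j, if i < j then f i j else 1) * (∏ j, if j < i then f i j else 1) := by
    intro i
    rw [prod_erase_eq_if, ← Finset.prod_mul_distrib]
    apply Finset.prod_congr rfl
    intro j _
    rcases lt_trichotomy i j with h | h | h
    · simp [h, h.ne', not_lt.2 h.le]
    · simp [h]
    · simp [h, h.ne, not_lt.2 h.le]
  calc ∏ i, ∏ j ∈ univ.erase i, f i j
      = (∏ i, ∏ j, if i < j then f i j else 1) * (∏ i, ∏ j, if j < i then f i j else 1) := by
        rw [← Finset.prod_mul_distrib]; exact Finset.prod_congr rfl fun i _ => step1 i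
    _ = (∏ i, ∏ j, if i < j then f i j else 1) * (∏ i, ∏ j, if i < j then f j i else 1) := by
        congr 1; exact Finset.prod_comm
    _ = ∏ i, ∏ j, if i < j then f i j * f j i else 1 := by
        rw [← Finset.prod_mul_distrib]
        refine Finset.prod_congr rfl fun i _ => ?_
        rw [← Finset.prod_mul_distrib]
        exact Finset.prod_congr rfl fun j _ => if_mul_if _ _

lemma prod_if_mul {n : ℕ} (f g : Fin n → Fin n → ℝ) :
    (∏ i : Fin n, ∏ j : Fin n, if i < j then f i j else 1) *
      (∏ i : Fin n, ∏ j : Fin n, if i < j then g i j else 1)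
    = ∏ i : Fin n, ∏ j : Fin n, if i < j then f i j * g i j else 1 := by
  rw [← Finset.prod_mul_distrib]
  refine Finset.prod_congr rfl fun i _ => ?_
  rw [← Finset.prod_mul_distrib]
  exact Finset.prod_congr rfl fun j _ => if_mul_if _ _

lemma det_xpow_rev {n : ℕ} (x : Fin n → ℝ) :
    Matrix.det (Matrix.of fun i j : Fin n => x i ^ (n - 1 - j.val))
      = ∏ i : Fin n, ∏ j : Fin n, if i < j then x i - x j else 1 := by
  have h1 : (Matrix.of fun i j : Fin n => x i ^ (n - 1 - j.val)) =
      (Matrix.vandermonde (fun i => x (Fin.rev i))).submatrix Fin.revPerm Fin.revPerm := by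
    ext i j
    simp only [Matrix.submatrix_apply, Matrix.vandermonde_apply, Matrix.of_apply, Fin.revPerm_apply,
      Fin.rev_rev]
    congr 1
    rw [Fin.val_rev]; omega
  rw [h1, Matrix.det_submatrix_equiv_self, Matrix.det_vandermonde]
  have : ∀ i : Fin n, ∏ j ∈ Finset.Ioi i, (x (Fin.rev j) - x (Fin.rev i))
      = ∏ j, if i < j then x (Fin.rev j) - x (Fin.rev i) else 1 := fun i => prod_Ioi_eq_if _ _
  simp_rw [this]
  rw [← Equiv.prod_comp Fin.revPerm
    (fun i => ∏ j, if i < j then x (Fin.rev j) - x (Fin.rev i) else 1)]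
  have : ∀ i : Fin n, (∏ j, if Fin.revPerm i < j then x (Fin.rev j) - x (Fin.rev (Fin.revPerm i)) else 1)
      = ∏ j, if Fin.revPerm i < Fin.revPerm j then x (Fin.rev (Fin.revPerm j)) - x i else 1 := by
    intro i
    rw [← Equiv.prod_comp Fin.revPerm]
    simp [Fin.rev_rev]
  simp_rw [this]
  simp only [Fin.revPerm_apply, Fin.rev_rev, Fin.rev_lt_rev]
  exact Finset.prod_comm

lemma myContAt_prod {ι : Type*} (s : Finset ι) (f : ι → ℝ → ℝ) {t : ℝ}
    (h : ∀ i ∈ s, ContinuousAt (fun q => f i q) t) :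
    ContinuousAt (fun q => ∏ i ∈ s, f i q) t :=
  tendsto_finset_prod s h

lemma myContAt_det {n : ℕ} (A : ℝ → Matrix (Fin n) (Fin n) ℝ) {t : ℝ}
    (h : ∀ i j, ContinuousAt (fun q => A q i j) t) :
    ContinuousAt (fun q => (A q).det) t := by
  simp only [Matrix.det_apply']
  apply tendsto_finset_sum
  intro σ _
  exact (tendsto_finset_prod univ (fun i _ => h (σ i) i)).const_mul _

lemma qPoch_zero (q a : ℝ) : qPoch q a 0 = 1 := by simp [qPoch]

lemma qPoch_one (q a : ℝ) : qPoch q a 1 = 1 - a := by simp [qPoch]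

lemma pair_case (t x y : ℝ) (a b : ℕ) (ha : a ≤ 1) (hb : b ≤ 1)
    (ht0 : t ≠ 0) (hx : x ≠ 0) (hy : y ≠ 0)
    (dxy : x - y ≠ 0) (dyx : y - x ≠ 0) (d3 : y - t * x ≠ 0) (d4 : x - t * y ≠ 0) :
    ((y - t * x) / (y - x)) ^ a * ((x - t * y) / (x - y)) ^ b *
      ((qPoch t (t * x / (t * y)) a / qPoch t (t * x / y) a) *
        (qPoch t (t * x / (t ^ b * y)) a / qPoch t (x / (t ^ b * y)) a)) *
      (t ^ a * x - t ^ b * y)⁻¹ * (x - y) = 1 := by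
  have hd3 : 1 - t * x / y ≠ 0 := by
    rw [show (1 : ℝ) - t * x / y = (y - t * x) / y by field_simp]
    exact div_ne_zero d3 hy
  have hd4 : 1 - x / y ≠ 0 := by
    rw [show (1 : ℝ) - x / y = (y - x) / y by field_simp]
    exact div_ne_zero dyx hy
  have hd5 : 1 - x / (t * y) ≠ 0 := by
    rw [show (1 : ℝ) - x / (t * y) = (t * y - x) / (t * y) by field_simp]
    exact div_ne_zero (fun h => d4 (by linarith [sub_eq_zero.mp h])) (mul_ne_zero ht0 hy)
  have d3' : t * x - y ≠ 0 := fun h => d3 (by linarith)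
  have d4' : t * y - x ≠ 0 := fun h => d4 (by linarith)
  have r1 : t * x / (t * y) = x / y := by
    rw [mul_div_mul_left _ _ ht0]
  have r2 : (1 : ℝ) - x / y = (y - x) / y := by field_simp
  have r3 : (1 : ℝ) - t * x / y = (y - t * x) / y := by field_simp
  have r4 : (1 : ℝ) - x / (t * y) = (t * y - x) / (t * y) := by
    rw [eq_div_iff (mul_ne_zero ht0 hy)]
    field_simp
  have d6 : t * x - t * y ≠ 0 := by
    rw [show t * x - t * y = t * (x - y) by ring]
    exact mul_ne_zero ht0 dxy
  interval_cases a <;> interval_cases b <;>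
    simp only [pow_zero, pow_one, qPoch_zero, qPoch_one, one_mul, mul_one, div_one, r1, r2, r3, r4]
  · exact inv_mul_cancel₀ dxy
  · field_simp
  · field_simp [d6]
    ring
  · field_simp [show y * t - x ≠ 0 from fun h => d4' (by linarith)]
    ring

/-- Lemma 7.1 (preliminary to the `q = t` Schur specialization): for `θ ∈ {0,1}^n`,
the coefficient `C^{(q,t)}_θ(u)` tends to `(-1)^{|θ|}` as `q → t`, `q ≠ t`. -/
theorem C_coefficient_tendsto_schur_case
    (n : ℕ) (hn : 1 ≤ n) (t : ℝ) (ht0 : t ≠ 0) (ht1 : t ≠ 1)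
    (u : Fin n → ℝ)
    (hu0 : ∀ i, u i ≠ 0) (hu1 : ∀ i, u i ≠ 1) (hut : ∀ i, u i ≠ 1 / t)
    (ht2 : ∀ i, t ^ 2 * u i ≠ 1)
    (huu : ∀ i j : Fin n, i ≠ j → u i ≠ u j)
    (hutu : ∀ i j : Fin n, i ≠ j → u i ≠ t * u j)
    (htuu : ∀ i j : Fin n, i ≠ j → t * u i ≠ u j)
    (θ : Fin n → ℕ) (hθ : ∀ i, θ i ≤ 1) :
    Tendsto (fun q : ℝ =>
      (∏ k : Fin n,
        t ^ (θ k) * (qPoch q (q / t) (θ k) / qPoch q q (θ k)) *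
          (qPoch q (q * u k) (θ k) / qPoch q (q * t * u k) (θ k))) *
      (∏ i : Fin n, ∏ j : Fin n, if i < j then
          (qPoch q (q * u i / (t * u j)) (θ i) / qPoch q (q * u i / u j) (θ i)) *
            (qPoch q (t * u i / (q ^ (θ j) * u j)) (θ i) /
              qPoch q (u i / (q ^ (θ j) * u j)) (θ i))
        else 1) *
      (∏ i : Fin n, ∏ j : Fin n, if i < j then q ^ (θ i) * u i - q ^ (θ j) * u j else 1)⁻¹ *
      Matrix.det (Matrix.of fun i j : Fin n =>
        (q ^ (θ i) * u i) ^ (n - 1 - j.val) *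
          (1 - t ^ (j.val + 1) *
            ∏ k : Fin (n + 1),
              ((Fin.snoc u (1 / t) : Fin (n + 1) → ℝ) k - q ^ (θ i) * u i) /
                (t * (Fin.snoc u (1 / t) : Fin (n + 1) → ℝ) k - q ^ (θ i) * u i))))
      (𝓝[≠] t)
      (𝓝 ((-1 : ℝ) ^ (∑ i, θ i))) := by
  have hPhiF : ∀ q : ℝ, q ≠ t →
      (∏ k : Fin n,
        t ^ (θ k) * (qPoch q (q / t) (θ k) / qPoch q q (θ k)) *
          (qPoch q (q * u k) (θ k) / qPoch q (q * t * u k) (θ k))) *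
      (∏ i : Fin n, ∏ j : Fin n, if i < j then
          (qPoch q (q * u i / (t * u j)) (θ i) / qPoch q (q * u i / u j) (θ i)) *
            (qPoch q (t * u i / (q ^ (θ j) * u j)) (θ i) /
              qPoch q (u i / (q ^ (θ j) * u j)) (θ i))
        else 1) *
      (∏ i : Fin n, ∏ j : Fin n, if i < j then q ^ (θ i) * u i - q ^ (θ j) * u j else 1)⁻¹ *
      Matrix.det (Matrix.of fun i j : Fin n =>
        (q ^ (θ i) * u i) ^ (n - 1 - j.val) *
          (1 - t ^ (j.val + 1) *
            ∏ k : Fin (n + 1),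
              ((Fin.snoc u (1 / t) : Fin (n + 1) → ℝ) k - q ^ (θ i) * u i) /
                (t * (Fin.snoc u (1 / t) : Fin (n + 1) → ℝ) k - q ^ (θ i) * u i)))
      = Phi n t u θ q := by
    intro q hq
    have htq : t - q ≠ 0 := sub_ne_zero.mpr (Ne.symm hq)
    -- the determinant factorization
    have hM : (Matrix.of fun i j : Fin n =>
          (q ^ (θ i) * u i) ^ (n - 1 - j.val) *
            (1 - t ^ (j.val + 1) *
              ∏ k : Fin (n + 1),
                ((Fin.snoc u (1 / t) : Fin (n + 1) → ℝ) k - q ^ (θ i) * u i) /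
                  (t * (Fin.snoc u (1 / t) : Fin (n + 1) → ℝ) k - q ^ (θ i) * u i)))
        = Matrix.of fun i j : Fin n =>
            (if θ i = 0 then (1:ℝ) else (t - q)⁻¹) * Nmat n t u θ q i j := by
      ext i j
      simp only [Matrix.of_apply, Nmat]
      by_cases hi : θ i = 0
      · simp only [hi, pow_zero, one_mul, if_true, ite_true]
        have hP : (∏ k : Fin (n + 1),
            ((Fin.snoc u (1 / t) : Fin (n + 1) → ℝ) k - u i) /
              (t * (Fin.snoc u (1 / t) : Fin (n + 1) → ℝ) k - u i)) = 0 := by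
          apply Finset.prod_eq_zero (Finset.mem_univ i.castSucc)
          simp [Fin.snoc_castSucc]
        rw [hP]; ring
      · have hθi : θ i = 1 := by have := hθ i; omega
        simp only [hi, if_false, hθi, pow_one, one_ne_zero]
        have hsplit : (∏ k : Fin (n + 1),
            ((Fin.snoc u (1 / t) : Fin (n + 1) → ℝ) k - q * u i) /
              (t * (Fin.snoc u (1 / t) : Fin (n + 1) → ℝ) k - q * u i))
            = ((1 - q) / (t - q)) * Rfun n t u i q := by
          rw [Fin.prod_univ_castSucc]
          simp only [Fin.snoc_castSucc, Fin.snoc_last]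
          rw [← Finset.mul_prod_erase Finset.univ _ (Finset.mem_univ i)]
          have e1 : (u i - q * u i) / (t * u i - q * u i) = (1 - q) / (t - q) := by
            rw [show u i - q * u i = (1 - q) * u i by ring,
              show t * u i - q * u i = (t - q) * u i by ring,
              mul_div_mul_right _ _ (hu0 i)]
          have e2 : t * (1 / t) = 1 := by field_simp
          rw [e1, e2, Rfun]; ring
        rw [hsplit]
        field_simp
        try ring
    rw [hM]
    rw [show (Matrix.of fun i j : Fin n =>
        (if θ i = 0 then (1:ℝ) else (t - q)⁻¹) * Nmat n t u θ q i j).det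
      = (∏ i : Fin n, if θ i = 0 then (1:ℝ) else (t - q)⁻¹) * (Nmat n t u θ q).det from
      Matrix.det_mul_column _ _]
    have hcc : (∏ i : Fin n, if θ i = 0 then (1:ℝ) else (t - q)⁻¹)
        = ((t - q)⁻¹) ^ (∑ i, θ i) := by
      rw [← Finset.prod_pow_eq_pow_sum]
      apply Finset.prod_congr rfl
      intro k _
      rcases Nat.le_one_iff_eq_zero_or_eq_one.mp (hθ k) with h | h <;> simp [h]
    have hf1 : (∏ k : Fin n,
          t ^ (θ k) * (qPoch q (q / t) (θ k) / qPoch q q (θ k)) *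
            (qPoch q (q * u k) (θ k) / qPoch q (q * t * u k) (θ k)))
        = (t - q) ^ (∑ i, θ i) *
          (∏ k : Fin n, if θ k = 0 then 1 else (1 - q * u k) / ((1 - q) * (1 - q * t * u k))) := by
      rw [← Finset.prod_pow_eq_pow_sum, ← Finset.prod_mul_distrib]
      apply Finset.prod_congr rfl
      intro k _
      rcases Nat.le_one_iff_eq_zero_or_eq_one.mp (hθ k) with h | h
      · simp [h, qPoch]
      · simp only [h, pow_one, if_false, one_ne_zero, qPoch, Finset.prod_range_one, pow_zero,
          mul_one]
        rw [mul_div_assoc' t, div_mul_div_comm, mul_div_assoc']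
        congr 2
        field_simp
    rw [hf1, hcc]
    rw [Phi]
    set a := (∏ k : Fin n, if θ k = 0 then 1 else (1 - q * u k) / ((1 - q) * (1 - q * t * u k))) with ha
    set b := (∏ i : Fin n, ∏ j : Fin n, if i < j then
        (qPoch q (q * u i / (t * u j)) (θ i) / qPoch q (q * u i / u j) (θ i)) *
          (qPoch q (t * u i / (q ^ (θ j) * u j)) (θ i) /
            qPoch q (u i / (q ^ (θ j) * u j)) (θ i)) else 1) with hb
    set v := (∏ i : Fin n, ∏ j : Fin n, if i < j then q ^ (θ i) * u i - q ^ (θ j) * u j else 1) with hv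
    set d := (Nmat n t u θ q).det with hd
    have hcancel : (t - q) ^ (∑ i, θ i) * ((t - q)⁻¹) ^ (∑ i, θ i) = 1 := by
      rw [← mul_pow, mul_inv_cancel₀ htq, one_pow]
    linear_combination a * b * v⁻¹ * d * hcancel
  have hcont : ContinuousAt (Phi n t u θ) t := by
    have h1t : (1 : ℝ) - t ≠ 0 := sub_ne_zero.mpr (Ne.symm ht1)
    have h3 : ∀ i, 1 - t * u i ≠ 0 := by
      intro i
      refine sub_ne_zero.mpr fun h => hut i ?_
      rw [eq_div_iff ht0]; linarith
    have h2 : ∀ i, 1 - t * t * u i ≠ 0 := fun i =>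
      sub_ne_zero.mpr (fun h => ht2 i (by rw [pow_two]; linarith))
    have hpne : ∀ j, t ^ (θ j) * u j ≠ 0 := fun j => mul_ne_zero (pow_ne_zero _ ht0) (hu0 j)
    have hA : ContinuousAt (fun q : ℝ =>
        ∏ k : Fin n, if θ k = 0 then 1 else (1 - q * u k) / ((1 - q) * (1 - q * t * u k))) t := by
      apply myContAt_prod
      intro k _
      by_cases hk : θ k = 0
      · simp only [hk, if_true]; exact continuousAt_const
      · simp only [hk, if_false]
        apply ContinuousAt.div (by fun_prop) (by fun_prop)
        have : (1 - t) * (1 - t * t * u k) ≠ 0 := mul_ne_zero h1t (h2 k)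
        simpa using this
    have hB : ContinuousAt (fun q : ℝ =>
        ∏ i : Fin n, ∏ j : Fin n, if i < j then
          (qPoch q (q * u i / (t * u j)) (θ i) / qPoch q (q * u i / u j) (θ i)) *
            (qPoch q (t * u i / (q ^ (θ j) * u j)) (θ i) /
              qPoch q (u i / (q ^ (θ j) * u j)) (θ i))
        else 1) t := by
      apply myContAt_prod
      intro i _
      apply myContAt_prod
      intro j _
      by_cases hij : i < j
      · simp only [hij, if_true]
        rcases Nat.le_one_iff_eq_zero_or_eq_one.mp (hθ i) with hi | hi
        · simp only [hi, qPoch_zero, div_one, mul_one]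
          exact continuousAt_const
        · have hij' : i ≠ j := ne_of_lt hij
          simp only [hi, qPoch_one]
          have hne1 : 1 - t * u i / u j ≠ 0 := by
            rw [show (1:ℝ) - t * u i / u j = (u j - t * u i) / u j by
              rw [eq_div_iff (hu0 j), sub_mul, one_mul, div_mul_cancel₀ _ (hu0 j)]]
            exact div_ne_zero (sub_ne_zero.mpr (Ne.symm (htuu i j hij'))) (hu0 j)
          have hne2 : 1 - u i / (t ^ (θ j) * u j) ≠ 0 := by
            rw [show (1:ℝ) - u i / (t ^ (θ j) * u j)
                = (t ^ (θ j) * u j - u i) / (t ^ (θ j) * u j) by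
              rw [eq_div_iff (hpne j), sub_mul, one_mul, div_mul_cancel₀ _ (hpne j)]]
            refine div_ne_zero (sub_ne_zero.mpr ?_) (hpne j)
            rcases Nat.le_one_iff_eq_zero_or_eq_one.mp (hθ j) with hj | hj
            · simpa [hj] using Ne.symm (huu i j hij')
            · simpa [hj] using Ne.symm (hutu i j hij')
          have hc1n : ContinuousAt (fun q : ℝ => 1 - q * u i / (t * u j)) t := by fun_prop
          have hc1d : ContinuousAt (fun q : ℝ => 1 - q * u i / u j) t := by fun_prop
          have hc2 : ContinuousAt (fun q : ℝ => 1 - t * u i / (q ^ (θ j) * u j)) t :=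
            continuousAt_const.sub (continuousAt_const.div (by fun_prop) (hpne j))
          have hc3 : ContinuousAt (fun q : ℝ => 1 - u i / (q ^ (θ j) * u j)) t :=
            continuousAt_const.sub (continuousAt_const.div (by fun_prop) (hpne j))
          exact (hc1n.div hc1d hne1).mul (hc2.div hc3 hne2)
      · simp only [hij, if_false]
        exact continuousAt_const
    have hVc : ContinuousAt (fun q : ℝ =>
        ∏ i : Fin n, ∏ j : Fin n, if i < j then q ^ (θ i) * u i - q ^ (θ j) * u j else 1) t := by
      apply myContAt_prod
      intro i _
      apply myContAt_prod
      intro j _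
      by_cases hij : i < j
      · simp only [hij, if_true]; fun_prop
      · simp only [hij, if_false]; exact continuousAt_const
    have hVne : (∏ i : Fin n, ∏ j : Fin n,
        if i < j then t ^ (θ i) * u i - t ^ (θ j) * u j else 1) ≠ 0 := by
      rw [Finset.prod_ne_zero_iff]
      intro i _
      rw [Finset.prod_ne_zero_iff]
      intro j _
      by_cases hij : i < j
      · simp only [hij, if_true]
        have hij' : i ≠ j := ne_of_lt hij
        refine sub_ne_zero.mpr ?_
        rcases Nat.le_one_iff_eq_zero_or_eq_one.mp (hθ i) with hi | hi <;>
          rcases Nat.le_one_iff_eq_zero_or_eq_one.mp (hθ j) with hj | hj <;>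
            simp only [hi, hj, pow_zero, pow_one, one_mul]
        · exact huu i j hij'
        · exact hutu i j hij'
        · exact htuu i j hij'
        · exact fun h => huu i j hij' (mul_left_cancel₀ ht0 h)
      · simp [hij]
    have hR : ∀ i, ContinuousAt (fun q => Rfun n t u i q) t := by
      intro i
      apply ContinuousAt.mul
      · apply myContAt_prod
        intro l hl
        have hli : l ≠ i := Finset.ne_of_mem_erase hl
        apply ContinuousAt.div (by fun_prop) (by fun_prop)
        rw [show t * u l - t * u i = t * (u l - u i) by ring]
        exact mul_ne_zero ht0 (sub_ne_zero.mpr (huu l i hli))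
      · exact ContinuousAt.div (by fun_prop) (by fun_prop) (h3 i)
    have hdet : ContinuousAt (fun q => (Nmat n t u θ q).det) t := by
      apply myContAt_det
      intro i j
      simp only [Nmat, Matrix.of_apply]
      by_cases hi : θ i = 0
      · simp only [hi, if_true]
        exact continuousAt_const
      · simp only [hi, if_false]
        apply ContinuousAt.mul (by fun_prop)
        apply ContinuousAt.sub (by fun_prop)
        apply ContinuousAt.mul continuousAt_const
        exact ContinuousAt.mul (by fun_prop) (hR i)
    unfold Phi
    exact ((hA.mul hB).mul (hVc.inv₀ hVne)).mul hdet
  have hval : Phi n t u θ t = (-1 : ℝ) ^ (∑ i, θ i) := by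
    have h1t : (1 : ℝ) - t ≠ 0 := sub_ne_zero.mpr (Ne.symm ht1)
    have h3 : ∀ i, 1 - t * u i ≠ 0 := by
      intro i
      refine sub_ne_zero.mpr fun h => hut i ?_
      rw [eq_div_iff ht0]
      linarith
    have h2 : ∀ i, 1 - t * t * u i ≠ 0 := fun i =>
      sub_ne_zero.mpr (fun h => ht2 i (by rw [pow_two]; linarith))
    set E : Fin n → ℝ := fun k => ∏ l ∈ univ.erase k, (u l - t * u k) / (u l - u k) with hE
    have hRt : ∀ k, Rfun n t u k t
        = (1 / t) ^ (n - 1) * E k * ((1 / t - t * u k) / (1 - t * u k)) := by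
      intro k
      rw [Rfun]
      congr 1
      calc ∏ l ∈ univ.erase k, (u l - t * u k) / (t * u l - t * u k)
          = ∏ l ∈ univ.erase k, (1 / t) * ((u l - t * u k) / (u l - u k)) := by
            refine Finset.prod_congr rfl fun l _ => ?_
            rw [div_mul_div_comm, one_mul, show t * (u l - u k) = t * u l - t * u k by ring]
        _ = (1 / t) ^ (n - 1) * E k := by
            rw [Finset.prod_mul_distrib, Finset.prod_const,
              Finset.card_erase_of_mem (Finset.mem_univ k), Finset.card_univ, Fintype.card_fin]
    have hG : ∀ k, (1 - t * u k) / ((1 - t) * (1 - t * t * u k)) *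
        (-(t ^ n * ((1 - t) * Rfun n t u k t))) = -E k := by
      intro k
      rw [hRt k, show t ^ n = t ^ (n - 1) * t by rw [← pow_succ]; congr 1; omega]
      field_simp [h1t, h2 k, h3 k, show 1 - t ^ 2 * u k ≠ 0 from by rw [pow_two]; exact h2 k]
      rw [← mul_pow, mul_one_div_cancel ht0, one_pow]
      ring
    -- determinant value
    have hNt : Nmat n t u θ t = Matrix.of fun i j =>
        (if θ i = 0 then 1 else -(t ^ n * ((1 - t) * Rfun n t u i t))) *
          (Matrix.of fun i j : Fin n => u i ^ (n - 1 - j.val)) i j := by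
      ext i j
      simp only [Nmat, Matrix.of_apply]
      by_cases hi : θ i = 0
      · simp [hi]
      · simp only [hi, if_false]
        have hj : (n - 1 - j.val) + (j.val + 1) = n := by omega
        calc (t * u i) ^ (n - 1 - j.val) * ((t - t) - t ^ (j.val + 1) * ((1 - t) * Rfun n t u i t))
            = -(t ^ ((n - 1 - j.val) + (j.val + 1)) * ((1 - t) * Rfun n t u i t) * u i ^ (n - 1 - j.val)) := by
              rw [mul_pow, pow_add]; ring
          _ = -(t ^ n * ((1 - t) * Rfun n t u i t)) * u i ^ (n - 1 - j.val) := by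
              rw [hj]; ring
    have hdet : (Nmat n t u θ t).det
        = (∏ i, if θ i = 0 then 1 else -(t ^ n * ((1 - t) * Rfun n t u i t))) *
          ∏ i : Fin n, ∏ j : Fin n, if i < j then u i - u j else 1 := by
      rw [hNt, Matrix.det_mul_column, det_xpow_rev]
    -- combine the per-index factors
    have hAc : (∏ k : Fin n, if θ k = 0 then 1 else (1 - t * u k) / ((1 - t) * (1 - t * t * u k))) *
        (∏ i, if θ i = 0 then 1 else -(t ^ n * ((1 - t) * Rfun n t u i t)))
        = (-1 : ℝ) ^ (∑ i, θ i) * ∏ k, (E k) ^ (θ k) := by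
      rw [← Finset.prod_pow_eq_pow_sum, ← Finset.prod_mul_distrib, ← Finset.prod_mul_distrib]
      refine Finset.prod_congr rfl fun k _ => ?_
      rcases Nat.le_one_iff_eq_zero_or_eq_one.mp (hθ k) with h | h
      · simp [h]
      · simp only [h, pow_one, Nat.one_ne_zero, if_false]
        rw [hG k]; ring
    -- the pairwise identity
    have hEpow : (∏ k, (E k) ^ (θ k)) = ∏ i : Fin n, ∏ j : Fin n, if i < j then
        ((u j - t * u i) / (u j - u i)) ^ (θ i) * ((u i - t * u j) / (u i - u j)) ^ (θ j)
        else 1 := by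
      have h1 : ∀ k, (E k) ^ (θ k)
          = ∏ l ∈ univ.erase k, ((u l - t * u k) / (u l - u k)) ^ (θ k) := by
        intro k; rw [hE]; exact (Finset.prod_pow _ _ _).symm
      simp_rw [h1]
      exact prod_erase_pair (fun k l => ((u l - t * u k) / (u l - u k)) ^ (θ k))
    have hVinv : (∏ i : Fin n, ∏ j : Fin n,
          if i < j then t ^ (θ i) * u i - t ^ (θ j) * u j else 1)⁻¹
        = ∏ i : Fin n, ∏ j : Fin n,
          if i < j then (t ^ (θ i) * u i - t ^ (θ j) * u j)⁻¹ else 1 := by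
      rw [← Finset.prod_inv_distrib]
      refine Finset.prod_congr rfl fun i _ => ?_
      rw [← Finset.prod_inv_distrib]
      refine Finset.prod_congr rfl fun j _ => ?_
      rw [apply_ite Inv.inv, inv_one]
    have hone : (∏ k, (E k) ^ (θ k)) *
        (∏ i : Fin n, ∏ j : Fin n, if i < j then
          (qPoch t (t * u i / (t * u j)) (θ i) / qPoch t (t * u i / u j) (θ i)) *
            (qPoch t (t * u i / (t ^ (θ j) * u j)) (θ i) /
              qPoch t (u i / (t ^ (θ j) * u j)) (θ i)) else 1) *
        (∏ i : Fin n, ∏ j : Fin n, if i < j then t ^ (θ i) * u i - t ^ (θ j) * u j else 1)⁻¹ *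
        (∏ i : Fin n, ∏ j : Fin n, if i < j then u i - u j else 1) = 1 := by
      rw [hEpow, hVinv, prod_if_mul, prod_if_mul, prod_if_mul]
      apply Finset.prod_eq_one
      intro i _
      apply Finset.prod_eq_one
      intro j _
      by_cases hij : i < j
      · simp only [hij, if_true]
        have hij' : i ≠ j := ne_of_lt hij
        have d2 : u i - u j ≠ 0 := sub_ne_zero.mpr (huu i j hij')
        have d1 : u j - u i ≠ 0 := sub_ne_zero.mpr (huu j i hij'.symm)
        have d3 : u j - t * u i ≠ 0 := sub_ne_zero.mpr (Ne.symm (htuu i j hij'))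
        have d4 : u i - t * u j ≠ 0 := sub_ne_zero.mpr (hutu i j hij')
        exact pair_case t (u i) (u j) (θ i) (θ j) (hθ i) (hθ j) ht0 (hu0 i) (hu0 j) d2 d1 d3 d4
      · simp [hij]
    rw [Phi, hdet]
    set A := (∏ k : Fin n, if θ k = 0 then 1 else (1 - t * u k) / ((1 - t) * (1 - t * t * u k))) with hA
    set B := (∏ i : Fin n, ∏ j : Fin n, if i < j then
        (qPoch t (t * u i / (t * u j)) (θ i) / qPoch t (t * u i / u j) (θ i)) *
          (qPoch t (t * u i / (t ^ (θ j) * u j)) (θ i) /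
            qPoch t (u i / (t ^ (θ j) * u j)) (θ i)) else 1) with hB
    set V := (∏ i : Fin n, ∏ j : Fin n, if i < j then t ^ (θ i) * u i - t ^ (θ j) * u j else 1) with hV
    set c := (∏ i, if θ i = 0 then 1 else -(t ^ n * ((1 - t) * Rfun n t u i t))) with hc
    set W := (∏ i : Fin n, ∏ j : Fin n, if i < j then u i - u j else 1) with hW
    have e1 : A * B * V⁻¹ * (c * W) = (A * c) * (B * V⁻¹ * W) := by ring
    rw [e1, hAc]
    have e2 : ((-1 : ℝ) ^ (∑ i, θ i) * ∏ k, (E k) ^ (θ k)) * (B * V⁻¹ * W)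
        = (-1 : ℝ) ^ (∑ i, θ i) * ((∏ k, (E k) ^ (θ k)) * B * V⁻¹ * W) := by ring
    rw [e2, hone, mul_one]
  have htend : Tendsto (Phi n t u θ) (𝓝[≠] t) (𝓝 ((-1 : ℝ) ^ (∑ i, θ i))) := by
    rw [← hval]
    exact hcont.tendsto.mono_left nhdsWithin_le_nhds
  apply htend.congr'
  filter_upwards [self_mem_nhdsWithin] with q hq
  exact (hPhiF q hq).symm
end

section
/- Let K be a field, n ≥ 1, a ∈ K, let v_1, …, v_n ∈ K be pairwise distinct, and let u_1, …, u_{n+1} ∈ K be such that v_i − u_k − a ≠ 0 for all 1 ≤ i ≤ n and 1 ≤ k ≤ n+1. Then (∏_{1≤i<j≤n} (v_i − v_j))^{−1} · det_{1≤i,j≤n}[v_i^{n−j} − (v_i − a)^{n−j} · ∏_{k=1}^{n+1} (v_i − u_k)/(v_i − u_k − a)] = Σ_{K ⊆ {1,…,n}} (−1)^{|K|} · ∏_{k ∈ K, j ∉ K} (v_k − v_j − a)/(v_k − v_j) · ∏_{i=1}^{n+1} ∏_{k ∈ K} (v_k − u_i)/(v_k − u_i − a). -/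
open Finset

section Aux
variable {R : Type*} [CommRing R]

lemma rev_vandermonde (n : ℕ) (x : Fin n → R) :
    (Matrix.of fun i j : Fin n => x i ^ (n - 1 - (j : ℕ))).det
      = ∏ i : Fin n, ∏ j ∈ Finset.Ioi i, (x i - x j) := by
  have h1 : (Matrix.of fun i j : Fin n => x i ^ (n - 1 - (j : ℕ)))
      = (Matrix.vandermonde fun i => x (Fin.rev i)).submatrix Fin.revPerm Fin.revPerm := by
    ext i j
    simp [Matrix.vandermonde, Fin.rev_rev, Fin.val_rev, Nat.sub_sub, Nat.add_comm]
  rw [h1, Matrix.det_submatrix_equiv_self, Matrix.det_vandermonde]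
  calc ∏ i : Fin n, ∏ j ∈ Finset.Ioi i, (x (Fin.rev j) - x (Fin.rev i))
      = ∏ i : Fin n, ∏ j ∈ Finset.Ioi (Fin.rev i), (x (Fin.rev j) - x i) := by
        rw [← Equiv.prod_comp Fin.revPerm
          (fun i => ∏ j ∈ Finset.Ioi i, (x (Fin.rev j) - x (Fin.rev i)))]
        simp [Fin.rev_rev]
    _ = ∏ i : Fin n, ∏ j ∈ Finset.Iio i, (x j - x i) := by
        refine Finset.prod_congr rfl fun i _ => ?_
        refine Finset.prod_nbij' Fin.rev Fin.rev ?_ ?_ ?_ ?_ ?_ <;>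
          simp [Finset.mem_Ioi, Finset.mem_Iio, Fin.rev_rev, Fin.rev_lt_rev,
            Fin.rev_lt_iff, Fin.lt_rev_iff]
    _ = ∏ i : Fin n, ∏ j ∈ Finset.Ioi i, (x i - x j) := by
        exact Finset.prod_comm' (by simp [Finset.mem_Ioi, Finset.mem_Iio])

lemma det_split (n : ℕ) (c : Fin n → R) (V W : Fin n → Fin n → R) :
    (Matrix.of fun i j => V i j + c i * W i j).det
      = ∑ s : Finset (Fin n),
          (∏ i ∈ s, c i) * (Matrix.of fun i j => if i ∈ s then W i j else V i j).det := by
  have key := (Matrix.detRowAlternating (n := Fin n) (R := R)).toMultilinearMap.map_add_univ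
      (fun i => c i • W i) V
  have h0 : (Matrix.of fun i j => V i j + c i * W i j)
      = ((fun i => c i • W i) + V : Fin n → Fin n → R) := by
    funext i j
    simp [mul_comm, add_comm]
  rw [show (Matrix.of fun i j => V i j + c i * W i j).det
      = (Matrix.detRowAlternating (n := Fin n) (R := R)).toMultilinearMap
          ((fun i => c i • W i) + V) from by rw [h0]; rfl, key]
  refine Finset.sum_congr rfl fun s _ => ?_
  have h1 : s.piecewise (fun i => c i • W i) V
      = s.piecewise (fun i => c i • (s.piecewise W V) i) (s.piecewise W V) := by
    funext i
    by_cases h : i ∈ s <;> simp [Finset.piecewise, h]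
  rw [h1, MultilinearMap.map_piecewise_smul]
  rw [smul_eq_mul]
  congr 1
  show Matrix.det _ = Matrix.det _
  congr 1
  funext i j
  by_cases h : i ∈ s <;> simp [Finset.piecewise, h]

end Aux

/-- The additive (difference-operator) analogue of the multiplicative determinant
expansion used for Macdonald's operator `D(u;q,t)` (Section 9). -/
theorem det_expansion_additive
    (Kf : Type*) [Field Kf] (n : ℕ) (hn : 1 ≤ n) (a : Kf)
    (v : Fin n → Kf) (u : Fin (n + 1) → Kf)
    (hv : ∀ i j : Fin n, i ≠ j → v i ≠ v j)
    (hvu : ∀ (i : Fin n) (k : Fin (n + 1)), v i - u k - a ≠ 0) :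
    (∏ i : Fin n, ∏ j : Fin n, if i < j then v i - v j else 1)⁻¹ *
      Matrix.det (Matrix.of fun i j : Fin n =>
        v i ^ (n - 1 - j.val) -
          (v i - a) ^ (n - 1 - j.val) *
            ∏ k : Fin (n + 1), (v i - u k) / (v i - u k - a)) =
    ∑ K : Finset (Fin n),
      (-1 : Kf) ^ K.card *
        (∏ k ∈ K, ∏ j ∈ Kᶜ, (v k - v j - a) / (v k - v j)) *
        ∏ i : Fin (n + 1), ∏ k ∈ K, (v k - u i) / (v k - u i - a) := by
  classical
  have hioi : ∀ f : Fin n → Fin n → Kf,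
      (∏ i : Fin n, ∏ j : Fin n, if i < j then f i j else 1)
        = ∏ i : Fin n, ∏ j ∈ Finset.Ioi i, f i j := by
    intro f
    refine Finset.prod_congr rfl fun i _ => ?_
    rw [show (∏ j : Fin n, if i < j then f i j else 1)
        = ∏ j : Fin n, if j ∈ Finset.Ioi i then f i j else 1 from
      Finset.prod_congr rfl fun j _ => by simp [Finset.mem_Ioi]]
    rw [Finset.prod_ite_mem, Finset.univ_inter]
  have hM : (Matrix.of fun i j : Fin n =>
        v i ^ (n - 1 - j.val) -
          (v i - a) ^ (n - 1 - j.val) * ∏ k : Fin (n + 1), (v i - u k) / (v i - u k - a))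
      = Matrix.of fun i j : Fin n =>
          v i ^ (n - 1 - j.val) +
            (-(∏ k : Fin (n + 1), (v i - u k) / (v i - u k - a))) *
              (v i - a) ^ (n - 1 - j.val) := by
    ext i j
    simp only [Matrix.of_apply]
    ring
  rw [hM, det_split n (fun i => -(∏ k : Fin (n + 1), (v i - u k) / (v i - u k - a)))
      (fun i j => v i ^ (n - 1 - j.val)) (fun i j => (v i - a) ^ (n - 1 - j.val)),
    Finset.mul_sum, hioi]
  refine Finset.sum_congr rfl fun s _ => ?_
  have hmix : (Matrix.of fun i j : Fin n =>
        if i ∈ s then (v i - a) ^ (n - 1 - j.val) else v i ^ (n - 1 - j.val))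
      = Matrix.of fun i j : Fin n =>
          (if i ∈ s then v i - a else v i) ^ (n - 1 - j.val) := by
    ext i j
    by_cases h : i ∈ s <;> simp [h]
  rw [hmix, rev_vandermonde]
  set w : Fin n → Kf := fun i => if i ∈ s then v i - a else v i with hw
  set T : Fin n → Fin n → Kf := fun i j =>
    if i ∈ s ∧ j ∉ s then (v i - v j - a) / (v i - v j) else 1 with hT
  -- the ratio computation
  have hPD : (∏ i : Fin n, ∏ j ∈ Finset.Ioi i, (v i - v j))⁻¹ *
        (∏ i : Fin n, ∏ j ∈ Finset.Ioi i, (w i - w j))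
      = ∏ k ∈ s, ∏ j ∈ sᶜ, (v k - v j - a) / (v k - v j) := by
    have h1 : ∏ i : Fin n, ∏ j ∈ Finset.Ioi i, ((w i - w j) / (v i - v j))
        = (∏ i : Fin n, ∏ j ∈ Finset.Ioi i, (w i - w j)) /
            (∏ i : Fin n, ∏ j ∈ Finset.Ioi i, (v i - v j)) := by
      simp [Finset.prod_div_distrib]
    have h2 : ∀ i j : Fin n, i < j → (w i - w j) / (v i - v j) = T i j * T j i := by
      intro i j hij
      have hvij : v i - v j ≠ 0 := sub_ne_zero.mpr (hv i j (ne_of_lt hij))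
      by_cases hi : i ∈ s <;> by_cases hj : j ∈ s
      · simp only [hw, hT, if_pos hi, if_pos hj]
        rw [if_neg (by tauto), if_neg (by tauto), mul_one]
        rw [show v i - a - (v j - a) = v i - v j by ring, div_self hvij]
      · simp only [hw, hT, if_pos hi, if_neg hj]
        rw [if_pos ⟨hi, hj⟩, if_neg (by tauto), mul_one]
        congr 1
        ring
      · simp only [hw, hT, if_neg hi, if_pos hj]
        rw [if_neg (by tauto), if_pos ⟨hj, hi⟩, one_mul, ← neg_div_neg_eq]
        congr 1 <;> ring
      · simp only [hw, hT, if_neg hi, if_neg hj]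
        rw [if_neg (by tauto), if_neg (by tauto), mul_one, div_self hvij]
    calc (∏ i : Fin n, ∏ j ∈ Finset.Ioi i, (v i - v j))⁻¹ *
            (∏ i : Fin n, ∏ j ∈ Finset.Ioi i, (w i - w j))
        = ∏ i : Fin n, ∏ j ∈ Finset.Ioi i, ((w i - w j) / (v i - v j)) := by
          rw [h1, div_eq_inv_mul]
      _ = ∏ i : Fin n, ∏ j ∈ Finset.Ioi i, (T i j * T j i) := by
          refine Finset.prod_congr rfl fun i _ => Finset.prod_congr rfl fun j hj => ?_
          exact h2 i j (Finset.mem_Ioi.mp hj)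
      _ = (∏ i : Fin n, ∏ j ∈ Finset.Ioi i, T i j) *
            (∏ i : Fin n, ∏ j ∈ Finset.Ioi i, T j i) := by
          simp [Finset.prod_mul_distrib]
      _ = (∏ i : Fin n, ∏ j ∈ Finset.Ioi i, T i j) *
            (∏ i : Fin n, ∏ j ∈ Finset.Iio i, T i j) := by
          congr 1
          exact Finset.prod_comm' (by simp [Finset.mem_Ioi, Finset.mem_Iio])
      _ = ∏ i : Fin n, ∏ j : Fin n, T i j := by
          rw [← Finset.prod_mul_distrib]
          refine Finset.prod_congr rfl fun i _ => ?_
          rw [show ∏ j ∈ Finset.Ioi i, T i j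
              = ∏ j : Fin n, if j ∈ Finset.Ioi i then T i j else 1 from by
            rw [Finset.prod_ite_mem, Finset.univ_inter]]
          rw [show ∏ j ∈ Finset.Iio i, T i j
              = ∏ j : Fin n, if j ∈ Finset.Iio i then T i j else 1 from by
            rw [Finset.prod_ite_mem, Finset.univ_inter]]
          rw [← Finset.prod_mul_distrib]
          refine Finset.prod_congr rfl fun j _ => ?_
          rcases lt_trichotomy i j with h | h | h
          · simp [Finset.mem_Ioi, Finset.mem_Iio, h, asymm h]
          · subst h
            simp [hT]
          · simp [Finset.mem_Ioi, Finset.mem_Iio, h, asymm h]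
      _ = ∏ k ∈ s, ∏ j ∈ sᶜ, (v k - v j - a) / (v k - v j) := by
          have hrow : ∀ i : Fin n, (∏ j : Fin n, T i j)
              = if i ∈ s then ∏ j ∈ sᶜ, (v i - v j - a) / (v i - v j) else 1 := by
            intro i
            by_cases hi : i ∈ s
            · rw [show ∏ j : Fin n, T i j
                  = ∏ j : Fin n, if j ∈ sᶜ then (v i - v j - a) / (v i - v j) else 1 from
                Finset.prod_congr rfl fun j _ => by simp [hT, hi, Finset.mem_compl]]
              rw [Finset.prod_ite_mem, Finset.univ_inter, if_pos hi]
            · simp [hT, hi]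
          rw [Finset.prod_congr rfl fun i _ => hrow i, Finset.prod_ite_mem, Finset.univ_inter]
  have hc : (∏ i ∈ s, -(∏ k : Fin (n + 1), (v i - u k) / (v i - u k - a)))
      = (-1 : Kf) ^ s.card *
          ∏ i ∈ s, ∏ k : Fin (n + 1), (v i - u k) / (v i - u k - a) := by
    rw [Finset.prod_congr rfl fun i (_ : i ∈ s) =>
        (show -(∏ k : Fin (n + 1), (v i - u k) / (v i - u k - a))
          = (-1 : Kf) * ∏ k : Fin (n + 1), (v i - u k) / (v i - u k - a) by ring),
      Finset.prod_mul_distrib, Finset.prod_const]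
  have hBr : (∏ i : Fin (n + 1), ∏ k ∈ s, (v k - u i) / (v k - u i - a))
      = ∏ k ∈ s, ∏ i : Fin (n + 1), (v k - u i) / (v k - u i - a) := Finset.prod_comm
  rw [hBr, hc, ← hPD]
  ring
end

section
/- Let n ≥ 1, a ∈ ℝ, let v_1, …, v_n ∈ ℝ be pairwise distinct, and let u_1, …, u_{n+1} ∈ ℝ be such that v_i ≠ u_k + a for all 1 ≤ i ≤ n and 1 ≤ k ≤ n+1. For q > 0 put V_i(q) = q^{v_i} and U_k(q) = q^{u_k} (real powers). Then, as q tends to 1 with q ≠ 1 (through positive reals), the quantity (∏_{1≤i<j≤n} (V_i(q) − V_j(q)))^{−1} · det_{1≤i,j≤n}[V_i(q)^{n−j} · (1 − q^{a·j} · ∏_{k=1}^{n+1} (U_k(q) − V_i(q))/(q^a U_k(q) − V_i(q)))] tends to (∏_{1≤i<j≤n} (v_i − v_j))^{−1} · det_{1≤i,j≤n}[v_i^{n−j} − (v_i − a)^{n−j} · ∏_{k=1}^{n+1} (v_i − u_k)/(v_i − u_k − a)]. -/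
open Finset Filter Topology Real

noncomputable def epsJ (n : ℕ) : ℝ :=
  ((Equiv.Perm.sign (Fin.revPerm : Equiv.Perm (Fin n)) : ℤ) : ℝ) *
    ∏ i : Fin n, ∏ _j ∈ Finset.Ioi i, (-1 : ℝ)

lemma det_rev_vandermonde (n : ℕ) (z : Fin n → ℝ) :
    Matrix.det (Matrix.of fun i j : Fin n => z i ^ (n - 1 - j.val)) =
      epsJ n * ∏ i : Fin n, ∏ j : Fin n, if i < j then z i - z j else 1 := by
  have h1 : (Matrix.of fun i j : Fin n => z i ^ (n - 1 - j.val)) =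
      (Matrix.vandermonde z).submatrix id (Fin.revPerm : Equiv.Perm (Fin n)) := by
    ext i j
    simp only [Matrix.of_apply, Matrix.submatrix_apply, id_eq, Matrix.vandermonde_apply,
      Fin.revPerm_apply, Fin.val_rev]
    congr 1
    omega
  rw [h1, Matrix.det_permute', Matrix.det_vandermonde]
  have h2 : ∀ i : Fin n, (∏ j : Fin n, if i < j then z i - z j else 1) =
      ∏ j ∈ Finset.Ioi i, (z i - z j) := by
    intro i
    rw [← Finset.prod_filter, Finset.filter_lt_eq_Ioi]
  have h3 : ∀ i : Fin n, (∏ j ∈ Finset.Ioi i, (z j - z i)) =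
      (∏ _j ∈ Finset.Ioi i, (-1 : ℝ)) * ∏ j ∈ Finset.Ioi i, (z i - z j) := by
    intro i
    rw [← Finset.prod_mul_distrib]
    exact Finset.prod_congr rfl fun j _ => by ring
  simp only [h2, h3]
  rw [Finset.prod_mul_distrib, epsJ]
  ring

lemma rpow_ne_rpow {q α β : ℝ} (hq0 : 0 < q) (hq1 : q ≠ 1) (h : α ≠ β) :
    q ^ α ≠ q ^ β := by
  rw [Real.rpow_def_of_pos hq0, Real.rpow_def_of_pos hq0]
  intro hc
  exact h (mul_left_cancel₀ (Real.log_ne_zero_of_pos_of_ne_one hq0 hq1) (Real.exp_injective hc))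

lemma slope_lim (α β : ℝ) :
    Tendsto (fun q : ℝ => (q ^ α - q ^ β) / (q - 1))
      (nhdsWithin 1 (Set.Ioi (0 : ℝ) \ {1})) (𝓝 (α - β)) := by
  have h1 : HasDerivAt (fun q : ℝ => q ^ α - q ^ β) (α - β) 1 := by
    have ha := Real.hasDerivAt_rpow_const (x := 1) (p := α) (Or.inl one_ne_zero)
    have hb := Real.hasDerivAt_rpow_const (x := 1) (p := β) (Or.inl one_ne_zero)
    have h := ha.sub hb
    simp only [Real.one_rpow, mul_one] at h
    exact h
  have h2 := hasDerivAt_iff_tendsto_slope.mp h1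
  have h3 : Tendsto (slope (fun q : ℝ => q ^ α - q ^ β) 1)
      (nhdsWithin 1 (Set.Ioi (0 : ℝ) \ {1})) (𝓝 (α - β)) :=
    h2.mono_left (nhdsWithin_mono _ (fun x hx => hx.2))
  refine h3.congr (fun q => ?_)
  simp [slope, Real.one_rpow, div_eq_inv_mul]

lemma ratio_lim (α β γ δ : ℝ) (h : γ ≠ δ) :
    Tendsto (fun q : ℝ => (q ^ α - q ^ β) / (q ^ γ - q ^ δ))
      (nhdsWithin 1 (Set.Ioi (0 : ℝ) \ {1})) (𝓝 ((α - β) / (γ - δ))) := by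
  have h1 := (slope_lim α β).div (slope_lim γ δ) (sub_ne_zero.mpr h)
  refine Tendsto.congr' ?_ h1
  filter_upwards [self_mem_nhdsWithin] with q hq
  have hq1 : q - 1 ≠ 0 := sub_ne_zero.mpr hq.2
  simp only [Pi.div_apply]
  rw [div_div_div_cancel_right₀ hq1]

lemma expandJ (n : ℕ) (x y c : Fin n → ℝ) (hx : ∀ i j : Fin n, i ≠ j → x i ≠ x j) :
    (∏ i : Fin n, ∏ j : Fin n, if i < j then x i - x j else 1)⁻¹ *
      Matrix.det (Matrix.of fun i j : Fin n =>
        x i ^ (n - 1 - j.val) - c i * y i ^ (n - 1 - j.val)) =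
    epsJ n * ∑ s : Finset (Fin n), (∏ i ∈ s, (-c i)) *
      ∏ i : Fin n, ∏ j : Fin n,
        if i < j then
          ((if i ∈ s then y i else x i) - (if j ∈ s then y j else x j)) / (x i - x j)
        else 1 := by
  have hPV : (∏ i : Fin n, ∏ j : Fin n, if i < j then x i - x j else 1) ≠ 0 := by
    refine Finset.prod_ne_zero_iff.mpr fun i _ => Finset.prod_ne_zero_iff.mpr fun j _ => ?_
    split_ifs with hij
    · exact sub_ne_zero.mpr (hx i j (ne_of_lt hij))
    · exact one_ne_zero
  set B : Fin n → Fin n → ℝ := fun i j => (-c i) * y i ^ (n - 1 - j.val) with hB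
  set A : Fin n → Fin n → ℝ := fun i j => x i ^ (n - 1 - j.val) with hA
  have hM : (Matrix.of fun i j : Fin n =>
      x i ^ (n - 1 - j.val) - c i * y i ^ (n - 1 - j.val)) = Matrix.of (B + A) := by
    ext i j; simp [hB, hA]; ring
  have hdet : Matrix.det (Matrix.of (B + A)) =
      ∑ s : Finset (Fin n), Matrix.det (Matrix.of (s.piecewise B A)) := by
    exact (Matrix.detRowAlternating (R := ℝ) (n := Fin n)).toMultilinearMap.map_add_univ B A
  have hterm : ∀ s : Finset (Fin n), Matrix.det (Matrix.of (s.piecewise B A)) =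
      (∏ i ∈ s, (-c i)) * (epsJ n *
        ∏ i : Fin n, ∏ j : Fin n,
          if i < j then (if i ∈ s then y i else x i) - (if j ∈ s then y j else x j) else 1) := by
    intro s
    have hsp : Matrix.of (s.piecewise B A) =
        Matrix.of (fun i j => (if i ∈ s then -c i else 1) *
          ((if i ∈ s then y i else x i) ^ (n - 1 - j.val))) := by
      ext i j
      by_cases hi : i ∈ s <;> simp [Finset.piecewise, hi, hB, hA]
    rw [hsp, Matrix.det_mul_column (fun i => if i ∈ s then -c i else 1)
      (fun i j => (if i ∈ s then y i else x i) ^ (n - 1 - j.val))]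
    rw [show (Matrix.det fun i j : Fin n => (if i ∈ s then y i else x i) ^ (n - 1 - j.val)) = _
      from det_rev_vandermonde n (fun i => if i ∈ s then y i else x i)]
    rw [show (∏ i : Fin n, if i ∈ s then -c i else 1) = ∏ i ∈ s, (-c i) by
      rw [← Finset.prod_filter]; congr 1; ext i; simp]
    try ring
  rw [hM, hdet]
  rw [Finset.mul_sum, Finset.mul_sum]
  refine Finset.sum_congr rfl fun s _ => ?_
  rw [hterm s]
  have hprod : (∏ i : Fin n, ∏ j : Fin n,
      if i < j then (if i ∈ s then y i else x i) - (if j ∈ s then y j else x j) else 1) =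
      (∏ i : Fin n, ∏ j : Fin n,
        if i < j then
          ((if i ∈ s then y i else x i) - (if j ∈ s then y j else x j)) / (x i - x j)
        else 1) * (∏ i : Fin n, ∏ j : Fin n, if i < j then x i - x j else 1) := by
    rw [← Finset.prod_mul_distrib]
    refine Finset.prod_congr rfl fun i _ => ?_
    rw [← Finset.prod_mul_distrib]
    refine Finset.prod_congr rfl fun j _ => ?_
    by_cases hij : i < j
    · simp only [if_pos hij]
      exact (div_mul_cancel₀ _ (sub_ne_zero.mpr (hx i j (ne_of_lt hij)))).symm
    · simp only [if_neg hij, one_mul]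
  rw [hprod]
  field_simp

lemma pow_aux {q : ℝ} (hq0 : 0 < q) (x : ℝ) (m : ℕ) : (q ^ x) ^ m = q ^ (x * (m : ℝ)) := by
  rw [← Real.rpow_natCast (q ^ x) m, ← Real.rpow_mul hq0.le]

/-- Lemma 9.1 (key determinant limit for Jack polynomials): the Macdonald determinant
factor with `V_i = q^{v_i}`, `U_k = q^{u_k}`, `t = q^a` tends to its additive (Jack)
analogue as `q → 1` through positive reals, `q ≠ 1`. -/
theorem det_limit_jack
    (n : ℕ) (hn : 1 ≤ n) (a : ℝ) (v : Fin n → ℝ) (u : Fin (n + 1) → ℝ)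
    (hv : ∀ i j : Fin n, i ≠ j → v i ≠ v j)
    (hvu : ∀ (i : Fin n) (k : Fin (n + 1)), v i ≠ u k + a) :
    Tendsto (fun q : ℝ =>
      (∏ i : Fin n, ∏ j : Fin n, if i < j then q ^ (v i) - q ^ (v j) else 1)⁻¹ *
        Matrix.det (Matrix.of fun i j : Fin n =>
          (q ^ (v i)) ^ (n - 1 - j.val) *
            (1 - q ^ (a * ((j.val : ℝ) + 1)) *
              ∏ k : Fin (n + 1),
                (q ^ (u k) - q ^ (v i)) / (q ^ a * q ^ (u k) - q ^ (v i)))))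
      (nhdsWithin 1 (Set.Ioi (0 : ℝ) \ {1}))
      (𝓝 ((∏ i : Fin n, ∏ j : Fin n, if i < j then v i - v j else 1)⁻¹ *
        Matrix.det (Matrix.of fun i j : Fin n =>
          v i ^ (n - 1 - j.val) -
            (v i - a) ^ (n - 1 - j.val) *
              ∏ k : Fin (n + 1), (v i - u k) / (v i - u k - a)))) := by
  have hval : (∏ i : Fin n, ∏ j : Fin n, if i < j then v i - v j else 1)⁻¹ *
      Matrix.det (Matrix.of fun i j : Fin n =>
        v i ^ (n - 1 - j.val) -
          (v i - a) ^ (n - 1 - j.val) * ∏ k : Fin (n + 1), (v i - u k) / (v i - u k - a)) =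
      epsJ n * ∑ s : Finset (Fin n),
        (∏ i ∈ s, -(∏ k : Fin (n + 1), (v i - u k) / (v i - u k - a))) *
        ∏ i : Fin n, ∏ j : Fin n,
          if i < j then
            ((if i ∈ s then v i - a else v i) - (if j ∈ s then v j - a else v j)) / (v i - v j)
          else 1 := by
    have hmat : (Matrix.of fun i j : Fin n =>
        v i ^ (n - 1 - j.val) -
          (v i - a) ^ (n - 1 - j.val) * ∏ k : Fin (n + 1), (v i - u k) / (v i - u k - a)) =
        (Matrix.of fun i j : Fin n =>
          v i ^ (n - 1 - j.val) -
            (∏ k : Fin (n + 1), (v i - u k) / (v i - u k - a)) * (v i - a) ^ (n - 1 - j.val)) := by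
      ext i j; simp [mul_comm]
    rw [hmat]
    exact expandJ n v (fun i => v i - a)
      (fun i => ∏ k : Fin (n + 1), (v i - u k) / (v i - u k - a)) hv
  rw [hval]
  have hEq : (fun q : ℝ =>
      epsJ n * ∑ s : Finset (Fin n),
        (∏ i ∈ s, -((q ^ a) ^ n *
          ∏ k : Fin (n + 1), (q ^ (u k) - q ^ (v i)) / (q ^ (a + u k) - q ^ (v i)))) *
        ∏ i : Fin n, ∏ j : Fin n,
          if i < j then
            ((if i ∈ s then q ^ (v i - a) else q ^ (v i)) -
              (if j ∈ s then q ^ (v j - a) else q ^ (v j))) / (q ^ (v i) - q ^ (v j))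
          else 1)
      =ᶠ[nhdsWithin 1 (Set.Ioi (0 : ℝ) \ {1})]
      (fun q : ℝ =>
        (∏ i : Fin n, ∏ j : Fin n, if i < j then q ^ (v i) - q ^ (v j) else 1)⁻¹ *
          Matrix.det (Matrix.of fun i j : Fin n =>
            (q ^ (v i)) ^ (n - 1 - j.val) *
              (1 - q ^ (a * ((j.val : ℝ) + 1)) *
                ∏ k : Fin (n + 1),
                  (q ^ (u k) - q ^ (v i)) / (q ^ a * q ^ (u k) - q ^ (v i))))) := by
    filter_upwards [self_mem_nhdsWithin] with q hq
    have hq0 : (0 : ℝ) < q := hq.1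
    have hq1 : q ≠ 1 := hq.2
    have hx : ∀ i j : Fin n, i ≠ j → q ^ (v i) ≠ q ^ (v j) :=
      fun i j hij => rpow_ne_rpow hq0 hq1 (hv i j hij)
    have hmat : (Matrix.of fun i j : Fin n =>
        (q ^ (v i)) ^ (n - 1 - j.val) *
          (1 - q ^ (a * ((j.val : ℝ) + 1)) *
            ∏ k : Fin (n + 1),
              (q ^ (u k) - q ^ (v i)) / (q ^ a * q ^ (u k) - q ^ (v i)))) =
        (Matrix.of fun i j : Fin n =>
          (q ^ (v i)) ^ (n - 1 - j.val) -
            ((q ^ a) ^ n *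
              ∏ k : Fin (n + 1), (q ^ (u k) - q ^ (v i)) / (q ^ (a + u k) - q ^ (v i))) *
            (q ^ (v i - a)) ^ (n - 1 - j.val)) := by
      ext i j
      have hden : ∀ k : Fin (n + 1), q ^ a * q ^ (u k) = q ^ (a + u k) :=
        fun k => (Real.rpow_add hq0 a (u k)).symm
      simp only [Matrix.of_apply, hden]
      have hm : ((n - 1 - j.val : ℕ) : ℝ) = (n : ℝ) - 1 - (j.val : ℝ) := by
        have hj : j.val < n := j.isLt
        rw [Nat.sub_sub, Nat.cast_sub (by omega : 1 + j.val ≤ n)]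
        push_cast; ring
      have key : (q ^ (v i)) ^ (n - 1 - j.val) * q ^ (a * ((j.val : ℝ) + 1)) =
          (q ^ a) ^ n * (q ^ (v i - a)) ^ (n - 1 - j.val) := by
        rw [pow_aux hq0, pow_aux hq0, pow_aux hq0, ← Real.rpow_add hq0, ← Real.rpow_add hq0]
        congr 1
        rw [hm]; push_cast; ring
      linear_combination
        (-(∏ k : Fin (n + 1), (q ^ (u k) - q ^ (v i)) / (q ^ (a + u k) - q ^ (v i)))) * key
    rw [hmat]
    exact (expandJ n (fun i => q ^ (v i)) (fun i => q ^ (v i - a))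
      (fun i => (q ^ a) ^ n *
        ∏ k : Fin (n + 1), (q ^ (u k) - q ^ (v i)) / (q ^ (a + u k) - q ^ (v i))) hx).symm
  refine Tendsto.congr' hEq ?_
  refine Tendsto.const_mul _ ?_
  refine tendsto_finset_sum _ fun s _ => Tendsto.mul ?_ ?_
  · refine tendsto_finset_prod _ fun i _ => ?_
    have h1 : Tendsto (fun q : ℝ => (q ^ a) ^ n)
        (nhdsWithin 1 (Set.Ioi (0 : ℝ) \ {1})) (𝓝 1) := by
      have hc : ContinuousAt (fun q : ℝ => (q ^ a) ^ n) 1 :=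
        (Real.continuousAt_rpow_const 1 a (Or.inl one_ne_zero)).pow n
      have := hc.tendsto.mono_left (nhdsWithin_le_nhds (s := Set.Ioi (0:ℝ) \ {1}))
      simpa using this
    have h2 : Tendsto (fun q : ℝ =>
        ∏ k : Fin (n + 1), (q ^ (u k) - q ^ (v i)) / (q ^ (a + u k) - q ^ (v i)))
        (nhdsWithin 1 (Set.Ioi (0 : ℝ) \ {1}))
        (𝓝 (∏ k : Fin (n + 1), (v i - u k) / (v i - u k - a))) := by
      have hfac : ∀ k : Fin (n + 1),
          (u k - v i) / ((a + u k) - v i) = (v i - u k) / (v i - u k - a) := by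
        intro k
        rw [show u k - v i = -(v i - u k) by ring,
          show (a + u k) - v i = -(v i - u k - a) by ring, neg_div_neg_eq]
      have := tendsto_finset_prod (Finset.univ : Finset (Fin (n + 1)))
        (fun k _ => ratio_lim (u k) (v i) (a + u k) (v i)
          (fun h => hvu i k (by linarith)))
      simpa [hfac] using this
    have := (h1.mul h2).neg
    simpa using this
  · refine tendsto_finset_prod _ fun i _ => ?_
    refine tendsto_finset_prod _ fun j _ => ?_
    by_cases hij : i < j
    · simp only [if_pos hij]
      have hvij : v i ≠ v j := hv i j (ne_of_lt hij)
      by_cases hi : i ∈ s <;> by_cases hj : j ∈ s <;>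
        simp only [if_pos, if_neg, hi, hj] <;>
        exact ratio_lim _ _ _ _ hvij
    · simp only [if_neg hij]
      exact tendsto_const_nhds
end
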